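/- arXiv:1312.3301 — 4 statements merged into one kernel-verified Lean document; each statement's English description precedes it below -/
import Mathlib

section
/- Let 1 ≤ ℓ ≤ k and let π₁, …, π_ℓ be up-right paths with values in {1,…,N}×{1,…,k} having pairwise disjoint supports. Then there exist up-right paths π'₁, …, π'_ℓ with values in {1,…,N}×{1,…,k}, with pairwise disjoint supports and starting abscissas all equal to 1, such that the union of the supports of the π_i is contained in the union of the supports of the π'_i. -/
/-- `IsUpRightPath N k p π` : `π` is an up-right path on `{1,…,p}` with values in
`{1,…,N} × {1,…,k}`: at each step, exactly one coordinate increases by `1`. -/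
def IsUpRightPath (N k p : ℕ) (π : ℕ → ℕ × ℕ) : Prop :=
  (∀ i, 1 ≤ i → i ≤ p → (1 ≤ (π i).1 ∧ (π i).1 ≤ N) ∧ (1 ≤ (π i).2 ∧ (π i).2 ≤ k)) ∧
  (∀ i, 2 ≤ i → i ≤ p →
    ((π i).1 = (π (i - 1)).1 + 1 ∧ (π i).2 = (π (i - 1)).2) ∨
    ((π i).1 = (π (i - 1)).1 ∧ (π i).2 = (π (i - 1)).2 + 1))

/-- The support of a path `π` defined on `{1,…,p}`: its image. -/
def pathSupport (p : ℕ) (π : ℕ → ℕ × ℕ) : Set (ℕ × ℕ) := π '' (Set.Icc 1 p)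

/-!
Encode each path by the list of its cells and a family by the list of these lists; disjointness
of the supports is then `Nodup` of the concatenation. While some path starts at abscissa `x ≥ 2`,
look at the cell `q` to the left of its start. If `q` is free, prepend it. If `q` lies on another
path `M`, cut `M` right after `q` and attach the path behind `q`; the cut-off tail of `M` (if any)
starts at abscissa `x - 1`, because its first cell lies above `q`. Either way the sum of the
starting abscissas drops. Once all paths start in column `1`, add paths until there are `ℓ` of
them: fewer than `k` paths either leave a cell `(1, y)` free, which becomes a new one-cell path,
or one of them has its second cell in column `1`, and its first cell is split off.
-/

namespace UpRightPath

open List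

def Step (a b : ℕ × ℕ) : Prop :=
  (b.1 = a.1 + 1 ∧ b.2 = a.2) ∨ (b.1 = a.1 ∧ b.2 = a.2 + 1)

theorem Step.lt {a b : ℕ × ℕ} (h : Step a b) : a < b := by
  rw [Prod.lt_iff]
  rcases h with ⟨h1, h2⟩ | ⟨h1, h2⟩ <;> omega

theorem pairwise_lt_of_isChain_step {L : List (ℕ × ℕ)} (h : L.IsChain Step) :
    L.Pairwise (· < ·) :=
  (h.imp fun _ _ => Step.lt).pairwise

structure IsGridPath (N k : ℕ) (L : List (ℕ × ℕ)) : Prop where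
  ne_nil : L ≠ []
  mem_Icc : ∀ a ∈ L, a ∈ Set.Icc (1, 1) (N, k)
  isChain : L.IsChain Step

namespace IsGridPath

variable {N k : ℕ}

theorem head_le_of_mem {p a : ℕ × ℕ} {T : List (ℕ × ℕ)} (h : IsGridPath N k (p :: T))
    (ha : a ∈ p :: T) : p ≤ a := by
  rcases mem_cons.mp ha with rfl | ha
  · exact le_rfl
  · exact (rel_of_pairwise_cons (pairwise_lt_of_isChain_step h.isChain) ha).le

theorem tail {p b : ℕ × ℕ} {T : List (ℕ × ℕ)} (h : IsGridPath N k (p :: b :: T)) :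
    IsGridPath N k (b :: T) :=
  ⟨cons_ne_nil _ _, fun a ha => h.mem_Icc a (mem_cons_of_mem _ ha),
    (isChain_cons_cons.mp h.isChain).2⟩

end IsGridPath

theorem isGridPath_singleton {N k : ℕ} {a : ℕ × ℕ} (ha : a ∈ Set.Icc (1, 1) (N, k)) :
    IsGridPath N k [a] :=
  ⟨cons_ne_nil _ _, by simpa using ha, isChain_singleton a⟩

structure IsDisjointFamily (N k : ℕ) (F : List (List (ℕ × ℕ))) : Prop where
  isGridPath : ∀ L ∈ F, IsGridPath N k L
  nodup : F.flatten.Nodup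

namespace IsDisjointFamily

variable {N k : ℕ} {F G : List (List (ℕ × ℕ))}

theorem perm (hF : IsDisjointFamily N k F) (h : F.Perm G) : IsDisjointFamily N k G :=
  ⟨fun L hL => hF.isGridPath L (h.symm.subset hL), hF.nodup.perm h.flatten⟩

theorem disjoint_of_cons {L M : List (ℕ × ℕ)} (hF : IsDisjointFamily N k (L :: F))
    (hM : M ∈ F) : L.Disjoint M :=
  rel_of_pairwise_cons (nodup_flatten.mp hF.nodup).2 hM

theorem prepend {p q : ℕ × ℕ} {T : List (ℕ × ℕ)}
    (hF : IsDisjointFamily N k ((p :: T) :: F)) (hq : q ∈ Set.Icc (1, 1) (N, k))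
    (hqp : Step q p) (hqF : q ∉ F.flatten) : IsDisjointFamily N k ((q :: p :: T) :: F) := by
  have hL := hF.isGridPath _ (mem_cons_self ..)
  have hqL : q ∉ p :: T := fun hq => (hqp.lt.trans_le (hL.head_le_of_mem hq)).ne rfl
  refine ⟨forall_mem_cons.mpr ⟨?_, fun P hP => hF.isGridPath P (mem_cons_of_mem _ hP)⟩,
    nodup_cons.mpr ⟨fun h => (mem_append.mp h).elim hqL hqF, hF.nodup⟩⟩
  exact ⟨cons_ne_nil _ _, forall_mem_cons.mpr ⟨hq, hL.mem_Icc⟩,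
    hL.isChain.cons (by simpa using hqp)⟩

theorem split {A B : List (ℕ × ℕ)} (hF : IsDisjointFamily N k ((A ++ B) :: F))
    (hA : A ≠ []) (hB : B ≠ []) : IsDisjointFamily N k (A :: B :: F) := by
  have hAB := hF.isGridPath _ (mem_cons_self ..)
  refine ⟨forall_mem_cons.mpr ⟨?_, forall_mem_cons.mpr ⟨?_, ?_⟩⟩, by simpa using hF.nodup⟩
  · exact ⟨hA, fun a ha => hAB.mem_Icc a (mem_append_left _ ha),
      hAB.isChain.prefix (prefix_append _ _)⟩
  · exact ⟨hB, fun a ha => hAB.mem_Icc a (mem_append_right _ ha),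
      hAB.isChain.suffix (suffix_append _ _)⟩
  · exact fun P hP => hF.isGridPath P (mem_cons_of_mem _ hP)

theorem merge {A L : List (ℕ × ℕ)} {q : ℕ × ℕ}
    (hF : IsDisjointFamily N k ((A ++ [q]) :: L :: F)) (hq : ∀ p ∈ L.head?, Step q p) :
    IsDisjointFamily N k ((A ++ [q] ++ L) :: F) := by
  have hM := hF.isGridPath _ (mem_cons_self ..)
  have hL := hF.isGridPath L (by simp)
  refine ⟨forall_mem_cons.mpr ⟨?_, fun P hP => hF.isGridPath P (by simp [hP])⟩,
    by simpa using hF.nodup⟩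
  exact ⟨by simp, forall_mem_append.mpr ⟨hM.mem_Icc, hL.mem_Icc⟩,
    isChain_append.mpr ⟨hM.isChain, hL.isChain, by simpa using hq⟩⟩

end IsDisjointFamily

def startSum (F : List (List (ℕ × ℕ))) : ℕ := (F.map fun L => L.headI.1).sum

theorem startSum_cons (L : List (ℕ × ℕ)) (F : List (List (ℕ × ℕ))) :
    startSum (L :: F) = L.headI.1 + startSum F := by
  simp [startSum]

theorem startSum_perm {F G : List (List (ℕ × ℕ))} (h : F.Perm G) : startSum F = startSum G :=
  (h.map _).sum_eq

variable {N k : ℕ} {F : List (List (ℕ × ℕ))}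

theorem exists_startSum_lt_of_left_mem {M T : List (ℕ × ℕ)} {q : ℕ × ℕ}
    (hF : IsDisjointFamily N k (M :: ((q.1 + 1, q.2) :: T) :: F)) (hq : q ∈ M) :
    ∃ G, IsDisjointFamily N k G ∧ startSum G < startSum (M :: ((q.1 + 1, q.2) :: T) :: F) ∧
      G.length ≤ F.length + 2 ∧ (M :: ((q.1 + 1, q.2) :: T) :: F).flatten ⊆ G.flatten := by
  have hqp : Step q (q.1 + 1, q.2) := Or.inl ⟨rfl, rfl⟩
  obtain ⟨A, B, rfl⟩ := append_of_mem hq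
  have hhead : ∀ X, (A ++ q :: X).headI = (A ++ q :: B).headI := by cases A <;> simp
  cases B with
  | nil =>
    refine ⟨(A ++ [q] ++ (q.1 + 1, q.2) :: T) :: F, hF.merge (by simpa using hqp), ?_, by simp,
      by simp⟩
    simp only [startSum_cons, append_assoc, singleton_append, hhead, headI_cons]
    omega
  | cons b B =>
    have hqb : Step q b := (isChain_cons_cons.mp
      ((hF.isGridPath _ (mem_cons_self ..)).isChain.suffix (suffix_append A _))).1
    have hbp : b ≠ (q.1 + 1, q.2) := fun hbp =>
      hF.disjoint_of_cons (mem_cons_self ..) (by simp [hbp]) (mem_cons_self ..)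
    -- The cell to the right of `q` starts the other path, so `b` lies above `q`.
    have hb : b.1 = q.1 := by
      rcases hqb with ⟨h1, h2⟩ | ⟨h1, -⟩
      · exact (hbp (Prod.ext h1 h2)).elim
      · exact h1
    have hsplit := (append_cons A q (b :: B) ▸ hF).split (by simp) (cons_ne_nil b B)
    refine ⟨(A ++ [q] ++ (q.1 + 1, q.2) :: T) :: (b :: B) :: F,
      (hsplit.perm (.cons _ (.swap _ _ _))).merge (by simpa using hqp), ?_, by simp, ?_⟩
    · simp only [startSum_cons, append_assoc, singleton_append, hhead, headI_cons, hb]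
      omega
    · intro a ha
      simp only [flatten_cons, mem_append, mem_cons] at ha ⊢
      tauto

theorem exists_startSum_lt {L : List (ℕ × ℕ)} (hF : IsDisjointFamily N k (L :: F))
    (hL : 2 ≤ L.headI.1) :
    ∃ G, IsDisjointFamily N k G ∧ startSum G < startSum (L :: F) ∧
      G.length ≤ F.length + 1 ∧ (L :: F).flatten ⊆ G.flatten := by
  obtain ⟨p, T, rfl⟩ := exists_cons_of_ne_nil (hF.isGridPath _ (mem_cons_self ..)).ne_nil
  have hp := (hF.isGridPath _ (mem_cons_self ..)).mem_Icc p (mem_cons_self ..)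
  rw [headI_cons] at hL
  obtain ⟨q, rfl⟩ : ∃ q : ℕ × ℕ, p = (q.1 + 1, q.2) := ⟨(p.1 - 1, p.2), by ext <;> simp; omega⟩
  by_cases hqF : q ∈ F.flatten
  · obtain ⟨M, hMF, hqM⟩ := mem_flatten.mp hqF
    have hperm : (((q.1 + 1, q.2) :: T) :: F).Perm (M :: ((q.1 + 1, q.2) :: T) :: F.erase M) :=
      ((perm_cons_erase hMF).cons _).trans (.swap _ _ _)
    obtain ⟨G, hG, hlt, hlen, hsub⟩ := exists_startSum_lt_of_left_mem (hF.perm hperm) hqM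
    refine ⟨G, hG, startSum_perm hperm ▸ hlt, ?_, Subset.trans hperm.flatten.subset hsub⟩
    have := (perm_cons_erase hMF).length_eq
    simp only [length_cons] at this
    omega
  · have hqIcc : q ∈ Set.Icc (1, 1) (N, k) :=
      ⟨⟨by simp only at hL; omega, hp.1.2⟩, ⟨by have := hp.2.1; simp only at this; omega, hp.2.2⟩⟩
    refine ⟨(q :: (q.1 + 1, q.2) :: T) :: F, hF.prepend hqIcc (Or.inl ⟨rfl, rfl⟩) hqF, ?_,
      by simp, by simp⟩
    simp only [startSum_cons, headI_cons]
    omega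

theorem exists_startsAtOne (hF : IsDisjointFamily N k F) :
    ∃ G, IsDisjointFamily N k G ∧ (∀ L ∈ G, L.headI.1 = 1) ∧ G.length ≤ F.length ∧
      F.flatten ⊆ G.flatten := by
  induction hs : startSum F using Nat.strong_induction_on generalizing F with
  | _ n ih =>
  by_cases hone : ∀ L ∈ F, L.headI.1 = 1
  · exact ⟨F, hF, hone, le_rfl, Subset.refl _⟩
  obtain ⟨L, hLF, hL⟩ := not_forall₂.mp hone
  have hL2 : 2 ≤ L.headI.1 := by
    obtain ⟨p, T, rfl⟩ := exists_cons_of_ne_nil (hF.isGridPath L hLF).ne_nil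
    have := ((hF.isGridPath _ hLF).mem_Icc p (mem_cons_self ..)).1.1
    simp only [headI_cons] at hL ⊢
    omega
  have hperm := perm_cons_erase hLF
  obtain ⟨G, hG, hlt, hlen, hsub⟩ := exists_startSum_lt (hF.perm hperm) hL2
  obtain ⟨H, hH, hH1, hHlen, hGH⟩ :=
    ih _ (hs ▸ startSum_perm hperm ▸ hlt) hG rfl
  refine ⟨H, hH, hH1, ?_, Subset.trans hperm.flatten.subset (Subset.trans hsub hGH)⟩
  have := hperm.length_eq
  simp only [length_cons] at this
  omega

theorem exists_second_cell_in_first_column (hF : IsDisjointFamily N k F) (hlen : F.length < k)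
    (hcol : ∀ y ∈ Finset.Icc 1 k, (1, y) ∈ F.flatten) :
    ∃ p b T, p :: b :: T ∈ F ∧ b.1 = 1 := by
  classical
  by_contra! hsecond
  have hhead : ∀ y ∈ Finset.Icc 1 k, (1, y) ∈ F.map headI := by
    intro y hy
    obtain ⟨L, hLF, hyL⟩ := mem_flatten.mp (hcol y hy)
    have hL := hF.isGridPath L hLF
    obtain ⟨p, T, rfl⟩ := exists_cons_of_ne_nil hL.ne_nil
    rcases mem_cons.mp hyL with hp | hyT
    · exact mem_map.mpr ⟨_, hLF, hp.symm⟩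
    obtain ⟨b, T', rfl⟩ := exists_cons_of_ne_nil (ne_nil_of_mem hyT)
    have hb_le : b.1 ≤ 1 := (hL.tail.head_le_of_mem hyT).1
    have hb_ge : 1 ≤ b.1 := (hL.mem_Icc b (by simp)).1.1
    exact absurd (by omega) (hsecond p b T' hLF)
  have hcard : k ≤ F.length := calc
    k = ((Finset.Icc 1 k).image (Prod.mk 1)).card := by
      rw [Finset.card_image_of_injective _ (Prod.mk_right_injective 1), Nat.card_Icc]; rfl
    _ ≤ (F.map headI).toFinset.card :=
      Finset.card_le_card fun a ha => by
        obtain ⟨y, hy, rfl⟩ := Finset.mem_image.mp ha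
        exact mem_toFinset.mpr (hhead y hy)
    _ ≤ F.length := (toFinset_card_le _).trans (length_map _).le
  omega

theorem exists_length_succ (hN : 1 ≤ N) (hF : IsDisjointFamily N k F)
    (hone : ∀ L ∈ F, L.headI.1 = 1) (hlen : F.length < k) :
    ∃ G, IsDisjointFamily N k G ∧ (∀ L ∈ G, L.headI.1 = 1) ∧ G.length = F.length + 1 ∧
      F.flatten ⊆ G.flatten := by
  by_cases hcol : ∀ y ∈ Finset.Icc 1 k, (1, y) ∈ F.flatten
  · obtain ⟨p, b, T, hLF, hb⟩ := exists_second_cell_in_first_column hF hlen hcol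
    have hperm := perm_cons_erase hLF
    have hsplit := (hF.perm hperm).split (A := [p]) (by simp) (cons_ne_nil b T)
    refine ⟨[p] :: (b :: T) :: F.erase (p :: b :: T), hsplit, ?_, ?_, ?_⟩
    · simp only [forall_mem_cons, headI_cons, hb]
      exact ⟨hone _ hLF, trivial, fun L hL => hone L (mem_of_mem_erase hL)⟩
    · simp [hperm.length_eq]
    · exact Subset.trans hperm.flatten.subset (by simp)
  · obtain ⟨y, hy, hyF⟩ := not_forall₂.mp hcol
    have hy' := Finset.mem_Icc.mp hy
    refine ⟨[(1, y)] :: F, ⟨forall_mem_cons.mpr ⟨isGridPath_singleton ?_, hF.isGridPath⟩,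
      nodup_cons.mpr ⟨hyF, hF.nodup⟩⟩, forall_mem_cons.mpr ⟨rfl, hone⟩, rfl, by simp⟩
    exact ⟨⟨le_rfl, hy'.1⟩, ⟨hN, hy'.2⟩⟩

theorem exists_length_eq (hN : 1 ≤ N) (hF : IsDisjointFamily N k F)
    (hone : ∀ L ∈ F, L.headI.1 = 1) {m : ℕ} (hFm : F.length ≤ m) (hmk : m ≤ k) :
    ∃ G, IsDisjointFamily N k G ∧ (∀ L ∈ G, L.headI.1 = 1) ∧ G.length = m ∧
      F.flatten ⊆ G.flatten := by
  induction m, hFm using Nat.le_induction with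
  | base => exact ⟨F, hF, hone, rfl, Subset.refl _⟩
  | succ m _ ih =>
    obtain ⟨G, hG, hG1, rfl, hFG⟩ := ih (by omega)
    obtain ⟨H, hH, hH1, hHlen, hGH⟩ := exists_length_succ hN hG hG1 (by omega)
    exact ⟨H, hH, hH1, hHlen, Subset.trans hFG hGH⟩

def toList (p : ℕ) (π : ℕ → ℕ × ℕ) : List (ℕ × ℕ) := (range p).map fun i => π (i + 1)

def ofList (L : List (ℕ × ℕ)) (i : ℕ) : ℕ × ℕ := L.getI (i - 1)

theorem mem_toList {p : ℕ} {π : ℕ → ℕ × ℕ} {a : ℕ × ℕ} :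
    a ∈ toList p π ↔ a ∈ pathSupport p π := by
  simp only [toList, pathSupport, mem_map, mem_range, Set.mem_image, Set.mem_Icc]
  constructor
  · rintro ⟨i, hi, rfl⟩
    exact ⟨i + 1, ⟨by omega, by omega⟩, rfl⟩
  · rintro ⟨i, ⟨hi1, hip⟩, rfl⟩
    exact ⟨i - 1, by omega, by rw [Nat.sub_add_cancel hi1]⟩

theorem isUpRightPath_iff {N k p : ℕ} {π : ℕ → ℕ × ℕ} :
    IsUpRightPath N k p π ↔
      (∀ a ∈ toList p π, a ∈ Set.Icc (1, 1) (N, k)) ∧ (toList p π).IsChain Step := by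
  simp only [toList, forall_mem_map, mem_range, isChain_map, isChain_range]
  refine and_congr ⟨fun h i hi => ?_, fun h i hi1 hip => ?_⟩
    ⟨fun h m hm => ?_, fun h i hi2 hip => ?_⟩
  · obtain ⟨⟨h1, h2⟩, h3, h4⟩ := h (i + 1) (by omega) (by omega)
    exact ⟨⟨h1, h3⟩, ⟨h2, h4⟩⟩
  · obtain ⟨⟨h1, h3⟩, ⟨h2, h4⟩⟩ := h (i - 1) (by omega)
    rw [Nat.sub_add_cancel hi1] at h1 h2 h3 h4
    exact ⟨⟨h1, h2⟩, h3, h4⟩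
  · exact h (m + 2) (by omega) (by omega)
  · have := h (i - 2) (by omega)
    rwa [show i - 2 + 1 = i - 1 by omega, show (i - 2).succ + 1 = i by omega] at this

theorem toList_ofList (L : List (ℕ × ℕ)) : toList L.length (ofList L) = L :=
  ext_getElem (by simp [toList]) fun i _ hi => by simp [toList, ofList, getI_eq_getElem _ hi]

theorem mem_pathSupport_ofList {L : List (ℕ × ℕ)} {a : ℕ × ℕ} :
    a ∈ pathSupport L.length (ofList L) ↔ a ∈ L := by
  rw [← mem_toList, toList_ofList]

theorem IsGridPath.isUpRightPath {L : List (ℕ × ℕ)} (h : IsGridPath N k L) :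
    IsUpRightPath N k L.length (ofList L) :=
  isUpRightPath_iff.mpr (by rw [toList_ofList]; exact ⟨h.mem_Icc, h.isChain⟩)

section Family

variable {ℓ : ℕ} {pl : Fin ℓ → ℕ} {π : Fin ℓ → ℕ → ℕ × ℕ}

def pathFamily (pl : Fin ℓ → ℕ) (π : Fin ℓ → ℕ → ℕ × ℕ) : List (List (ℕ × ℕ)) :=
  ((finRange ℓ).map fun r => toList (pl r) (π r)).filter (· ≠ [])

theorem length_pathFamily_le : (pathFamily pl π).length ≤ ℓ :=
  (length_filter_le _ _).trans (by simp)

theorem mem_flatten_pathFamily {a : ℕ × ℕ} :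
    a ∈ (pathFamily pl π).flatten ↔ ∃ r, a ∈ pathSupport (pl r) (π r) := by
  rw [pathFamily, flatten_filter_ne_nil]
  simp [mem_toList]

theorem isDisjointFamily_pathFamily (hπ : ∀ r, IsUpRightPath N k (pl r) (π r))
    (hdisj : ∀ r s, r ≠ s → Disjoint (pathSupport (pl r) (π r)) (pathSupport (pl s) (π s))) :
    IsDisjointFamily N k (pathFamily pl π) := by
  refine ⟨fun L hL => ?_, ?_⟩
  · obtain ⟨hLmem, hLne⟩ := mem_filter.mp hL
    obtain ⟨r, -, rfl⟩ := mem_map.mp hLmem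
    obtain ⟨hIcc, hchain⟩ := isUpRightPath_iff.mp (hπ r)
    exact ⟨by simpa using hLne, hIcc, hchain⟩
  · rw [pathFamily, flatten_filter_ne_nil, nodup_flatten, forall_mem_map, pairwise_map]
    refine ⟨fun r _ => ?_, (nodup_finRange ℓ).imp fun {r s} hrs a har has => ?_⟩
    · exact (pairwise_lt_of_isChain_step (isUpRightPath_iff.mp (hπ r)).2).nodup
    · exact Set.disjoint_left.mp (hdisj r s hrs) (mem_toList.mp har) (mem_toList.mp has)

end Family

theorem exists_upRightPaths_of_isDisjointFamily {ℓ : ℕ} {H : List (List (ℕ × ℕ))}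
    (hH : IsDisjointFamily N k H) (hone : ∀ L ∈ H, L.headI.1 = 1) (hlen : H.length = ℓ) :
    ∃ (pl' : Fin ℓ → ℕ) (π' : Fin ℓ → ℕ → ℕ × ℕ),
      (∀ r, 1 ≤ pl' r) ∧ (∀ r, IsUpRightPath N k (pl' r) (π' r)) ∧ (∀ r, (π' r 1).1 = 1) ∧
      (∀ r s, r ≠ s → Disjoint (pathSupport (pl' r) (π' r)) (pathSupport (pl' s) (π' s))) ∧
      ∀ a ∈ H.flatten, a ∈ ⋃ r, pathSupport (pl' r) (π' r) := by
  subst hlen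
  have hpath (r : Fin H.length) : IsGridPath N k H[r] := hH.isGridPath _ (getElem_mem _)
  have hpairwise := (nodup_flatten.mp hH.nodup).2
  refine ⟨fun r => H[r].length, fun r => ofList H[r],
    fun r => length_pos_of_ne_nil (hpath r).ne_nil, fun r => (hpath r).isUpRightPath,
    fun r => ?_, fun r s hrs => ?_, fun a ha => ?_⟩
  · simpa [ofList, getI_zero_eq_headI] using hone _ (getElem_mem _)
  · rw [Set.disjoint_left]
    intro a har has
    rw [mem_pathSupport_ofList] at har has
    rcases lt_or_gt_of_ne (Fin.val_ne_of_ne hrs) with h | h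
    · exact pairwise_iff_getElem.mp hpairwise r s r.2 s.2 h har has
    · exact pairwise_iff_getElem.mp hpairwise s r s.2 r.2 h has har
  · obtain ⟨L, hL, haL⟩ := mem_flatten.mp ha
    obtain ⟨i, hi, rfl⟩ := getElem_of_mem hL
    exact Set.mem_iUnion.mpr ⟨⟨i, hi⟩, mem_pathSupport_ofList.mpr haL⟩

end UpRightPath

theorem upRightPaths_extend_to_start_one_general
    (N k ℓ : ℕ) (hN : 1 ≤ N) (hℓk : ℓ ≤ k)
    (pl : Fin ℓ → ℕ) (π : Fin ℓ → ℕ → ℕ × ℕ)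
    (hπ : ∀ r, IsUpRightPath N k (pl r) (π r))
    (hdisj : ∀ r s, r ≠ s → Disjoint (pathSupport (pl r) (π r)) (pathSupport (pl s) (π s))) :
    ∃ (pl' : Fin ℓ → ℕ) (π' : Fin ℓ → ℕ → ℕ × ℕ),
      (∀ r, 1 ≤ pl' r) ∧
      (∀ r, IsUpRightPath N k (pl' r) (π' r)) ∧
      (∀ r, (π' r 1).1 = 1) ∧
      (∀ r s, r ≠ s → Disjoint (pathSupport (pl' r) (π' r)) (pathSupport (pl' s) (π' s))) ∧
      (⋃ r, pathSupport (pl r) (π r)) ⊆ ⋃ r, pathSupport (pl' r) (π' r) := by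
  obtain ⟨G, hG, hG1, hGlen, hFG⟩ :=
    UpRightPath.exists_startsAtOne (UpRightPath.isDisjointFamily_pathFamily hπ hdisj)
  obtain ⟨H, hH, hH1, hHlen, hGH⟩ :=
    UpRightPath.exists_length_eq hN hG hG1 (hGlen.trans UpRightPath.length_pathFamily_le) hℓk
  obtain ⟨pl', π', hpl', hπ', hstart, hdisj', hcover⟩ :=
    UpRightPath.exists_upRightPaths_of_isDisjointFamily hH hH1 hHlen
  refine ⟨pl', π', hpl', hπ', hstart, hdisj', fun a ha => hcover a (hGH (hFG ?_))⟩
  exact UpRightPath.mem_flatten_pathFamily.mpr (Set.mem_iUnion.mp ha)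

/-- Any family of `ℓ ≤ k` up-right paths in `{1,…,N} × {1,…,k}` with pairwise
disjoint supports can be covered by a family of `ℓ` up-right paths with pairwise
disjoint supports whose starting abscissas are all equal to `1`. -/
theorem upRightPaths_extend_to_start_one
    (N k ℓ : ℕ) (hN : 1 ≤ N) (hℓ : 1 ≤ ℓ) (hℓk : ℓ ≤ k)
    (pl : Fin ℓ → ℕ) (π : Fin ℓ → ℕ → ℕ × ℕ)
    (hpl : ∀ r, 1 ≤ pl r)
    (hπ : ∀ r, IsUpRightPath N k (pl r) (π r))
    (hdisj : ∀ r s, r ≠ s → Disjoint (pathSupport (pl r) (π r)) (pathSupport (pl s) (π s))) :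
    ∃ (pl' : Fin ℓ → ℕ) (π' : Fin ℓ → ℕ → ℕ × ℕ),
      (∀ r, 1 ≤ pl' r) ∧
      (∀ r, IsUpRightPath N k (pl' r) (π' r)) ∧
      (∀ r, (π' r 1).1 = 1) ∧
      (∀ r s, r ≠ s → Disjoint (pathSupport (pl' r) (π' r)) (pathSupport (pl' s) (π' s))) ∧
      (⋃ r, pathSupport (pl r) (π r)) ⊆ ⋃ r, pathSupport (pl' r) (π' r) :=
  upRightPaths_extend_to_start_one_general N k ℓ hN hℓk pl π hπ hdisj
end

section
/- Let 1 ≤ ℓ ≤ k and let π₁, …, π_ℓ be up-right paths with values in {1,…,N}×{1,…,k} having pairwise disjoint supports and starting abscissas all equal to 1. Then there exist up-right paths π'₁, …, π'_ℓ with pairwise disjoint supports, starting abscissas all equal to 1 and ending abscissas all equal to N, such that the union of the supports of the π_i is contained in the union of the supports of the π'_i. -/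
/-!
Every up-right path lies in the band `{(x, y) : h (x - 1) ≤ y ≤ h x}` of its profile `h`, the
largest ordinate it reaches at abscissas `≤ x`; conversely, the band of any monotone profile is
the support of an up-right path from abscissa `1` to `N`. So it suffices to replace the `ℓ`
profiles by `ℓ` monotone profiles whose bands are pairwise disjoint and cover theirs. Take the
order statistics `s_r(x)` of the profiles and stack them from the top:
`d_0 = s_ℓ` and `d_{t+1}(x) = min (s_{ℓ-t-1}(x)) (d_t(x - 1) - 1)`, so that `d_{t'}(x) < d_t(x - 1)`
for `t < t'` and the bands are disjoint. Since the paths start at distinct ordinates, at most `y`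
profiles lie below `y`, whence `d_t ≥ ℓ - t ≥ 1`. A point in the band of some profile lies in
the band of the order statistic given by counting the profiles below it, and descending through
the caps it lands in the band of some `d_u`.
-/

open Finset Function

def band (h : ℕ → ℕ) (N : ℕ) : Set (ℕ × ℕ) :=
  {q | 1 ≤ q.1 ∧ q.1 ≤ N ∧ h (q.1 - 1) ≤ q.2 ∧ q.2 ≤ h q.1}

section BandWalk

variable {h : ℕ → ℕ} {N : ℕ}

lemma eq_of_mem_band_of_add_eq (hmono : Monotone h) {p q : ℕ × ℕ} (hp : p ∈ band h N)
    (hq : q ∈ band h N) (hsum : p.1 + p.2 = q.1 + q.2) : p = q := by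
  suffices ∀ {p q : ℕ × ℕ}, p ∈ band h N → q ∈ band h N → p.1 < q.1 → p.1 + p.2 < q.1 + q.2 by
    rcases lt_trichotomy p.1 q.1 with hlt | heq | hgt
    · exact absurd hsum (this hp hq hlt).ne
    · exact Prod.ext heq (by omega)
    · exact absurd hsum (this hq hp hgt).ne'
  intro p q hp hq hlt
  have : h p.1 ≤ h (q.1 - 1) := hmono (by omega)
  have := hp.2.2.2
  have := hq.2.2.1
  omega

lemma disjoint_band {h' : ℕ → ℕ} (hlt : ∀ x, h' x < h (x - 1)) :
    Disjoint (band h N) (band h' N) :=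
  Set.disjoint_left.mpr fun q hq hq' => (hlt q.1).not_ge (hq.2.2.1.trans hq'.2.2.2)

def bandStep (h : ℕ → ℕ) (q : ℕ × ℕ) : ℕ × ℕ :=
  if q.2 < h q.1 then (q.1, q.2 + 1) else (q.1 + 1, q.2)

def bandWalk (h : ℕ → ℕ) (i : ℕ) : ℕ × ℕ := (bandStep h)^[i - 1] (1, h 0)

lemma bandWalk_succ {i : ℕ} (hi : 1 ≤ i) : bandWalk h (i + 1) = bandStep h (bandWalk h i) := by
  obtain ⟨n, rfl⟩ := Nat.exists_eq_add_of_le' hi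
  exact iterate_succ_apply' _ _ _

lemma bandWalk_mem_band (hmono : Monotone h) (hN : 1 ≤ N) {i : ℕ} (hi : 1 ≤ i)
    (hiN : i ≤ N + h N - h 0) :
    bandWalk h i ∈ band h N ∧ (bandWalk h i).1 + (bandWalk h i).2 = i + h 0 := by
  induction i, hi using Nat.le_induction with
  | base => exact ⟨⟨le_rfl, hN, le_rfl, hmono (Nat.zero_le 1)⟩, rfl⟩
  | succ n hn ih =>
    obtain ⟨⟨hx1, hxN, hlow, hup⟩, hsum⟩ := ih (by omega)
    rw [bandWalk_succ hn, bandStep]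
    split_ifs with hc
    · exact ⟨⟨hx1, hxN, hlow.trans (Nat.le_succ _), hc⟩, by simp only; omega⟩
    · have hedge : (bandWalk h n).2 = h (bandWalk h n).1 := by omega
      -- on the top edge of column `N` the walk is at `(N, h N)`, which it only reaches last
      have hxN' : (bandWalk h n).1 < N := by
        refine hxN.lt_of_ne fun hx => ?_
        have : h 0 ≤ h N := hmono (Nat.zero_le N)
        rw [hx] at hedge hsum
        omega
      refine ⟨⟨by omega, hxN', ?_, ?_⟩, by simp only; omega⟩
      · simp only [Nat.add_sub_cancel]; omega
      · exact hedge.le.trans (hmono (Nat.le_succ _))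

lemma bandWalk_last (hmono : Monotone h) (hN : 1 ≤ N) :
    bandWalk h (N + h N - h 0) = (N, h N) := by
  have h0N : h 0 ≤ h N := hmono (Nat.zero_le N)
  refine eq_of_mem_band_of_add_eq hmono (bandWalk_mem_band hmono hN (by omega) le_rfl).1
    ⟨hN, le_rfl, hmono (Nat.sub_le N 1), le_rfl⟩ ?_
  rw [(bandWalk_mem_band hmono hN (by omega) le_rfl).2]
  omega

lemma pathSupport_bandWalk (hmono : Monotone h) (hN : 1 ≤ N) :
    pathSupport (N + h N - h 0) (bandWalk h) = band h N := by
  refine Set.Subset.antisymm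
    (Set.image_subset_iff.mpr fun i hi => (bandWalk_mem_band hmono hN hi.1 hi.2).1) fun q hq => ?_
  have : h 0 ≤ h (q.1 - 1) := hmono (Nat.zero_le _)
  have : h q.1 ≤ h N := hmono hq.2.1
  have ⟨hx1, hxN, hlow, hup⟩ := hq
  have hi := bandWalk_mem_band hmono hN (i := q.1 + q.2 - h 0) (by omega) (by omega)
  exact ⟨q.1 + q.2 - h 0, ⟨by omega, by omega⟩,
    eq_of_mem_band_of_add_eq hmono hi.1 hq (by omega)⟩

lemma bandWalk_isUpRightPath (hmono : Monotone h) (hN : 1 ≤ N) {k : ℕ} (hpos : 1 ≤ h 0)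
    (hk : h N ≤ k) : IsUpRightPath N k (N + h N - h 0) (bandWalk h) := by
  refine ⟨fun i hi hiN => ?_, fun i hi hiN => ?_⟩
  · obtain ⟨⟨hx1, hxN, hlow, hup⟩, -⟩ := bandWalk_mem_band hmono hN hi hiN
    have : h 0 ≤ h ((bandWalk h i).1 - 1) := hmono (Nat.zero_le _)
    have : h (bandWalk h i).1 ≤ h N := hmono hxN
    exact ⟨⟨hx1, hxN⟩, by omega, by omega⟩
  · obtain ⟨n, rfl⟩ := Nat.exists_eq_add_of_le' (show 1 ≤ i by omega)
    rw [bandWalk_succ (by omega), Nat.add_sub_cancel, bandStep]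
    split_ifs
    · exact Or.inr ⟨rfl, rfl⟩
    · exact Or.inl ⟨rfl, rfl⟩

end BandWalk

section PathProfile

variable {N k p : ℕ} {π : ℕ → ℕ × ℕ}

lemma IsUpRightPath.le_of_le (hπ : IsUpRightPath N k p π) {i j : ℕ} (hi : 1 ≤ i) (hij : i ≤ j)
    (hj : j ≤ p) : π i ≤ π j := by
  induction j, hij using Nat.le_induction with
  | base => exact le_rfl
  | succ n hn ih =>
    refine (ih (by omega)).trans ?_
    have hstep := hπ.2 (n + 1) (by omega) hj
    rw [Nat.add_sub_cancel] at hstep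
    rcases hstep with ⟨hx, hy⟩ | ⟨hx, hy⟩ <;> exact Prod.mk_le_mk.mpr ⟨by omega, by omega⟩

/-- The `max` with the starting ordinate makes `pathProfile p π 0` that ordinate. -/
def pathProfile (p : ℕ) (π : ℕ → ℕ × ℕ) (x : ℕ) : ℕ :=
  max (π 1).2 ({i ∈ Icc 1 p | (π i).1 ≤ x}.sup fun i => (π i).2)

lemma pathProfile_mono (p : ℕ) (π : ℕ → ℕ × ℕ) : Monotone (pathProfile p π) :=
  fun _ _ hx => max_le_max le_rfl <| Finset.sup_mono <| Finset.monotone_filter_right _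
    fun _ _ hi => hi.trans hx

lemma start_le_pathProfile (x : ℕ) : (π 1).2 ≤ pathProfile p π x := le_max_left _ _

lemma pathProfile_le (hπ : IsUpRightPath N k p π) (hp : 1 ≤ p) (x : ℕ) :
    pathProfile p π x ≤ k :=
  max_le (hπ.1 1 le_rfl hp).2.2 <| Finset.sup_le fun i hi => by
    rw [mem_filter, mem_Icc] at hi
    exact (hπ.1 i hi.1.1 hi.1.2).2.2

lemma IsUpRightPath.pathSupport_subset_band (hπ : IsUpRightPath N k p π) :
    pathSupport p π ⊆ band (pathProfile p π) N := by
  rintro _ ⟨i, ⟨hi, hip⟩, rfl⟩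
  have hbounds := hπ.1 i hi hip
  refine ⟨hbounds.1.1, hbounds.1.2, max_le (hπ.le_of_le le_rfl hi hip).2 ?_, ?_⟩
  · refine Finset.sup_le fun j hj => ?_
    rw [mem_filter, mem_Icc] at hj
    rcases le_total i j with hij | hji
    · have := (hπ.le_of_le hi hij hj.1.2).1
      omega
    · exact (hπ.le_of_le hj.1.1 hji hip).2
  · exact le_max_of_le_right <| Finset.le_sup (f := fun j => (π j).2) <| by
      simp only [mem_filter, mem_Icc]; exact ⟨⟨hi, hip⟩, le_rfl⟩

end PathProfile

section OrderStatistics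

variable {L : ℕ} {g : Fin L → ℕ → ℕ}

def countLE (g : Fin L → ℕ → ℕ) (x y : ℕ) : ℕ := #{j | g j x ≤ y}

lemma countLE_mono (x : ℕ) : Monotone (countLE g x) :=
  fun _ _ hy => card_le_card <| monotone_filter_right _ fun _ _ hj => hj.trans hy

lemma countLE_anti (hmono : ∀ j, Monotone (g j)) (y : ℕ) : Antitone fun x => countLE g x y :=
  fun _ _ hx => card_le_card <| monotone_filter_right _ fun j _ hj => (hmono j hx).trans hj

lemma countLE_le_card (x y : ℕ) : countLE g x y ≤ L :=
  (card_filter_le _ _).trans (card_fin L).le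

lemma countLE_eq_card {x y : ℕ} (h : ∀ j, g j x ≤ y) : countLE g x y = L := by
  rw [countLE, filter_true_of_mem fun j _ => h j, card_univ, Fintype.card_fin]

lemma countLE_le_of_injective (s : Fin L → ℕ) (hs : Injective s) (hpos : ∀ j, 1 ≤ s j)
    (hle : ∀ j x, s j ≤ g j x) (x y : ℕ) : countLE g x y ≤ y := by
  have hmaps : Set.MapsTo s (({j | g j x ≤ y} : Finset (Fin L)) : Set (Fin L)) (Icc 1 y) :=
    fun j hj => mem_Icc.mpr ⟨hpos j, (hle j x).trans (mem_filter.mp hj).2⟩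
  simpa [countLE] using card_le_card_of_injOn s hmaps hs.injOn

lemma countLE_lt_countLE {j : Fin L} {x y c : ℕ} (hmono : ∀ j, Monotone (g j))
    (hlow : g j (x - 1) ≤ y) (hc : c < y) (hup : y ≤ g j x) :
    countLE g x c < countLE g (x - 1) y := by
  refine card_lt_card <| (ssubset_iff_of_subset ?_).mpr ⟨j, by simpa using hlow, by simpa using hc.trans_le hup⟩
  exact monotone_filter_right _ fun i _ hi => (hmono i (Nat.sub_le x 1)).trans (hi.trans hc.le)

/-- The `r`-th smallest of the values `g j x` (`0` for `r = 0`). -/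
noncomputable def orderStat (g : Fin L → ℕ → ℕ) (r x : ℕ) : ℕ := sInf {y | r ≤ countLE g x y}

lemma orderStat_le_iff {r : ℕ} (hr : r ≤ L) {x y : ℕ} :
    orderStat g r x ≤ y ↔ r ≤ countLE g x y := by
  refine ⟨fun hle => ?_, fun h => Nat.sInf_le h⟩
  have hne : {y | r ≤ countLE g x y}.Nonempty :=
    ⟨univ.sup fun j => g j x, show r ≤ _ from
      (countLE_eq_card fun j => le_sup (f := fun j => g j x) (mem_univ j)).symm ▸ hr⟩
  exact (Nat.sInf_mem hne).trans (countLE_mono x hle)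

lemma lt_orderStat_iff {r : ℕ} (hr : r ≤ L) {x y : ℕ} :
    y < orderStat g r x ↔ countLE g x y < r := by
  simpa only [not_le] using (orderStat_le_iff hr).not

lemma le_orderStat (hcard : ∀ x y, countLE g x y ≤ y) {r : ℕ} (hr : r ≤ L) (x : ℕ) :
    r ≤ orderStat g r x := by
  by_contra! hlt
  have := (orderStat_le_iff hr).mp (Nat.le_sub_one_of_lt hlt)
  have := hcard x (r - 1)
  omega

lemma orderStat_le {k : ℕ} (hk : ∀ j x, g j x ≤ k) {r : ℕ} (hr : r ≤ L) (x : ℕ) :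
    orderStat g r x ≤ k :=
  (orderStat_le_iff hr).mpr ((countLE_eq_card fun j => hk j x).symm ▸ hr)

lemma orderStat_mono (hmono : ∀ j, Monotone (g j)) {r : ℕ} (hr : r ≤ L) :
    Monotone (orderStat g r) :=
  fun _ _ hx => (orderStat_le_iff hr).mpr <|
    ((orderStat_le_iff hr).mp le_rfl).trans (countLE_anti hmono _ hx)

lemma orderStat_mono_left {r r' : ℕ} (hrr : r ≤ r') (hr : r' ≤ L) (x : ℕ) :
    orderStat g r x ≤ orderStat g r' x :=
  (orderStat_le_iff (hrr.trans hr)).mpr <| hrr.trans ((orderStat_le_iff hr).mp le_rfl)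

end OrderStatistics

section StackedProfiles

variable {L : ℕ} {g : Fin L → ℕ → ℕ}

noncomputable def stackedProfile (g : Fin L → ℕ → ℕ) : ℕ → ℕ → ℕ
  | 0, x => orderStat g L x
  | t + 1, x => min (orderStat g (L - (t + 1)) x) (stackedProfile g t (x - 1) - 1)

lemma stackedProfile_le_orderStat (t x : ℕ) :
    stackedProfile g t x ≤ orderStat g (L - t) x := by
  cases t with
  | zero => exact le_rfl
  | succ t => exact min_le_left _ _

lemma stackedProfile_succ_le (t x : ℕ) :
    stackedProfile g (t + 1) x ≤ stackedProfile g t (x - 1) - 1 :=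
  min_le_right _ _

lemma stackedProfile_mono (hmono : ∀ j, Monotone (g j)) (t : ℕ) :
    Monotone (stackedProfile g t) := by
  induction t with
  | zero => exact orderStat_mono hmono le_rfl
  | succ t ih =>
    exact fun _ _ hx => min_le_min (orderStat_mono hmono (Nat.sub_le _ _) hx)
      (Nat.sub_le_sub_right (ih (Nat.sub_le_sub_right hx 1)) 1)

lemma stackedProfile_le {k : ℕ} (hk : ∀ j x, g j x ≤ k) (t x : ℕ) : stackedProfile g t x ≤ k :=
  (stackedProfile_le_orderStat t x).trans (orderStat_le hk (Nat.sub_le L t) x)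

lemma sub_le_stackedProfile (hcard : ∀ x y, countLE g x y ≤ y) (t x : ℕ) :
    L - t ≤ stackedProfile g t x := by
  induction t generalizing x with
  | zero => exact le_orderStat hcard le_rfl x
  | succ t ih =>
    have := ih (x - 1)
    exact le_min (le_orderStat hcard (Nat.sub_le _ _) x) (by omega)

lemma stackedProfile_anti (hmono : ∀ j, Monotone (g j)) (x : ℕ) :
    Antitone fun t => stackedProfile g t x :=
  antitone_nat_of_succ_le fun t => (stackedProfile_succ_le t x).trans <|
    (Nat.sub_le _ 1).trans (stackedProfile_mono hmono t (Nat.sub_le x 1))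

lemma stackedProfile_lt (hmono : ∀ j, Monotone (g j)) (hcard : ∀ x y, countLE g x y ≤ y)
    {t t' : ℕ} (htt' : t < t') (ht : t < L) (x : ℕ) :
    stackedProfile g t' x < stackedProfile g t (x - 1) := by
  have h₁ : stackedProfile g t' x ≤ stackedProfile g (t + 1) x := stackedProfile_anti hmono x htt'
  have h₂ := stackedProfile_succ_le (g := g) t x
  have h₃ := sub_le_stackedProfile hcard t (x - 1)
  omega

lemma exists_stackedProfile_of_le_orderStat {t x y : ℕ} (hlow : stackedProfile g t (x - 1) ≤ y)
    (hup : y ≤ orderStat g (L - t) x) :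
    ∃ u ≤ t, stackedProfile g u (x - 1) ≤ y ∧ y ≤ stackedProfile g u x := by
  induction t with
  | zero => exact ⟨0, le_rfl, hlow, hup⟩
  | succ t ih =>
    by_cases hy : y ≤ stackedProfile g (t + 1) x
    · exact ⟨t + 1, le_rfl, hlow, hy⟩
    have hprev : stackedProfile g t (x - 1) ≤ y := by
      simp only [stackedProfile, not_le, min_lt_iff] at hy
      omega
    obtain ⟨u, hu, hband⟩ := ih hprev (hup.trans (orderStat_mono_left (by omega) (by omega) x))
    exact ⟨u, hu.trans t.le_succ, hband⟩

/-- For `r` the number of profiles at or below `q = (x, y)` at abscissa `x - 1`, the point `q` lies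
in the band of the `r`-th order statistic; descending from there undoes the caps. -/
lemma exists_mem_band_stackedProfile (hmono : ∀ j, Monotone (g j)) {j : Fin L} {N : ℕ}
    {q : ℕ × ℕ} (hq : q ∈ band (g j) N) : ∃ u < L, q ∈ band (stackedProfile g u) N := by
  obtain ⟨x, y⟩ := q
  obtain ⟨hx1, hxN, hlow, hup⟩ : 1 ≤ x ∧ x ≤ N ∧ g j (x - 1) ≤ y ∧ y ≤ g j x := hq
  set r := countLE g (x - 1) y
  have hr : r ≤ L := countLE_le_card _ _
  have hr1 : 1 ≤ r := card_pos.mpr ⟨j, by simpa using hlow⟩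
  have hlow' : orderStat g r (x - 1) ≤ y := (orderStat_le_iff hr).mpr le_rfl
  have hup' : y ≤ orderStat g r x := le_of_forall_lt fun c hc =>
    (lt_orderStat_iff hr).mpr (countLE_lt_countLE hmono hlow hc hup)
  have hLr : L - (L - r) = r := Nat.sub_sub_self hr
  obtain ⟨u, hu, hband⟩ := exists_stackedProfile_of_le_orderStat (t := L - r) (x := x) (y := y)
    ((stackedProfile_le_orderStat _ _).trans (by rwa [hLr])) (by rwa [hLr])
  exact ⟨u, by omega, hx1, hxN, hband⟩

end StackedProfiles

theorem upRightPaths_extend_to_end_N_general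
    (N k ℓ : ℕ) (hN : 1 ≤ N)
    (pl : Fin ℓ → ℕ) (π : Fin ℓ → ℕ → ℕ × ℕ)
    (hpl : ∀ r, 1 ≤ pl r)
    (hπ : ∀ r, IsUpRightPath N k (pl r) (π r))
    (hstart : ∀ r, (π r 1).1 = 1)
    (hdisj : ∀ r s, r ≠ s → Disjoint (pathSupport (pl r) (π r)) (pathSupport (pl s) (π s))) :
    ∃ (pl' : Fin ℓ → ℕ) (π' : Fin ℓ → ℕ → ℕ × ℕ),
      (∀ r, 1 ≤ pl' r) ∧
      (∀ r, IsUpRightPath N k (pl' r) (π' r)) ∧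
      (∀ r, (π' r 1).1 = 1) ∧
      (∀ r, (π' r (pl' r)).1 = N) ∧
      (∀ r s, r ≠ s → Disjoint (pathSupport (pl' r) (π' r)) (pathSupport (pl' s) (π' s))) ∧
      (⋃ r, pathSupport (pl r) (π r)) ⊆ ⋃ r, pathSupport (pl' r) (π' r) := by
  set g : Fin ℓ → ℕ → ℕ := fun r => pathProfile (pl r) (π r)
  have hmono : ∀ r, Monotone (g r) := fun r => pathProfile_mono _ _
  have hinj : Injective fun r => (π r 1).2 := by
    intro r s hrs
    by_contra hne
    have hmem : ∀ r, π r 1 ∈ pathSupport (pl r) (π r) := fun r => ⟨1, ⟨le_rfl, hpl r⟩, rfl⟩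
    exact Set.disjoint_left.mp (hdisj r s hne) (hmem r)
      ((Prod.ext (by rw [hstart, hstart]) hrs : π r 1 = π s 1) ▸ hmem s)
  have hcard : ∀ x y, countLE g x y ≤ y := countLE_le_of_injective _ hinj
    (fun r => ((hπ r).1 1 le_rfl (hpl r)).2.1) fun _ _ => start_le_pathProfile _
  set d : Fin ℓ → ℕ → ℕ := fun r => stackedProfile g r
  have hdmono : ∀ r, Monotone (d r) := fun r => stackedProfile_mono hmono r
  have hsupp : ∀ r, pathSupport (N + d r N - d r 0) (bandWalk (d r)) = band (d r) N :=
    fun r => pathSupport_bandWalk (hdmono r) hN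
  refine ⟨fun r => N + d r N - d r 0, fun r => bandWalk (d r), fun r => ?_, fun r => ?_,
    fun _ => rfl, fun r => ?_, fun r s hrs => ?_, ?_⟩ <;> dsimp only
  · have := hdmono r (Nat.zero_le N)
    omega
  · refine bandWalk_isUpRightPath (hdmono r) hN ?_
      (stackedProfile_le (fun r => pathProfile_le (hπ r) (hpl r)) r N)
    have : ℓ - r ≤ d r 0 := sub_le_stackedProfile hcard r 0
    omega
  · rw [bandWalk_last (hdmono r) hN]
  · rw [hsupp, hsupp]
    rcases lt_or_gt_of_ne (Fin.val_ne_of_ne hrs) with hlt | hlt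
    · exact disjoint_band fun x => stackedProfile_lt hmono hcard hlt r.2 x
    · exact (disjoint_band fun x => stackedProfile_lt hmono hcard hlt s.2 x).symm
  · refine Set.iUnion_subset fun r q hq => ?_
    obtain ⟨u, hu, hqu⟩ := exists_mem_band_stackedProfile hmono ((hπ r).pathSupport_subset_band hq)
    exact Set.mem_iUnion.mpr ⟨⟨u, hu⟩, (hsupp _).symm ▸ hqu⟩

/-- Any family of `ℓ ≤ k` up-right paths in `{1,…,N} × {1,…,k}` with pairwise
disjoint supports and starting abscissas all equal to `1` can be covered by a
family of `ℓ` up-right paths with pairwise disjoint supports, starting abscissas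
all equal to `1` and ending abscissas all equal to `N`. -/
theorem upRightPaths_extend_to_end_N
    (N k ℓ : ℕ) (hN : 1 ≤ N) (hℓ : 1 ≤ ℓ) (hℓk : ℓ ≤ k)
    (pl : Fin ℓ → ℕ) (π : Fin ℓ → ℕ → ℕ × ℕ)
    (hpl : ∀ r, 1 ≤ pl r)
    (hπ : ∀ r, IsUpRightPath N k (pl r) (π r))
    (hstart : ∀ r, (π r 1).1 = 1)
    (hdisj : ∀ r s, r ≠ s → Disjoint (pathSupport (pl r) (π r)) (pathSupport (pl s) (π s))) :
    ∃ (pl' : Fin ℓ → ℕ) (π' : Fin ℓ → ℕ → ℕ × ℕ),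
      (∀ r, 1 ≤ pl' r) ∧
      (∀ r, IsUpRightPath N k (pl' r) (π' r)) ∧
      (∀ r, (π' r 1).1 = 1) ∧
      (∀ r, (π' r (pl' r)).1 = N) ∧
      (∀ r s, r ≠ s → Disjoint (pathSupport (pl' r) (π' r)) (pathSupport (pl' s) (π' s))) ∧
      (⋃ r, pathSupport (pl r) (π r)) ⊆ ⋃ r, pathSupport (pl' r) (π' r) :=
  upRightPaths_extend_to_end_N_general N k ℓ hN pl π hpl hπ hstart hdisj
end

section
/- Let 1 ≤ ℓ ≤ k and let π₁, …, π_ℓ be up-right paths with values in {1,…,N}×{1,…,k} with pairwise disjoint supports, starting abscissas all equal to 1 and ending abscissas all equal to N. Then the collection can be re-indexed so that π₁ < π₂ < ⋯ < π_ℓ, where π < π' means that for every n ∈ {1,…,N}, every point of the support of π with first coordinate n lies strictly below (has strictly smaller second coordinate than) every point of the support of π' with first coordinate n. -/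
/-- `π < π'` for paths: for every abscissa `n`, every point of the support of `π`
in column `n` lies strictly below every point of the support of `π'` in column `n`. -/
def PathLt (p : ℕ) (π : ℕ → ℕ × ℕ) (p' : ℕ) (π' : ℕ → ℕ × ℕ) : Prop :=
  ∀ P ∈ pathSupport p π, ∀ Q ∈ pathSupport p' π', P.1 = Q.1 → P.2 < Q.2
/-!
The support of an up-right path running from column `1` to column `N` is a staircase: it meets
each column `n` in an interval of heights `[a n, b n]`, and it leaves column `n` by a horizontal
step from its top point, so `a (n + 1) = b n`. Two disjoint staircases are ordered in column `1`,
and they can never swap: if `S` is below `T` in column `n`, then `a_S (n + 1) = b_S n < a_T n ≤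
b_T n = a_T (n + 1)`, so column `n + 1` of `T` cannot lie below that of `S`. Hence "lies below"
is a strict total order on the family, and sorting by it gives the re-indexing.
-/

/-- The shape of the support of an up-right path crossing the columns `1, …, N`. -/
structure IsStaircase (N : ℕ) (S : Set (ℕ × ℕ)) (a b : ℕ → ℕ) : Prop where
  fst_mem : ∀ P ∈ S, 1 ≤ P.1 ∧ P.1 ≤ N
  le : ∀ n, 1 ≤ n → n ≤ N → a n ≤ b n
  mem_iff : ∀ n, 1 ≤ n → n ≤ N → ∀ y, (n, y) ∈ S ↔ a n ≤ y ∧ y ≤ b n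
  succ_eq : ∀ n, 1 ≤ n → n + 1 ≤ N → a (n + 1) = b n

/-- `PathLt p π p' π'` unfolds to `ColumnLt (pathSupport p π) (pathSupport p' π')`. -/
def ColumnLt (S T : Set (ℕ × ℕ)) : Prop :=
  ∀ P ∈ S, ∀ Q ∈ T, P.1 = Q.1 → P.2 < Q.2

namespace IsStaircase

variable {N : ℕ} {S T U : Set (ℕ × ℕ)} {a b a' b' : ℕ → ℕ}

theorem mem_bot (hS : IsStaircase N S a b) {n : ℕ} (hn : 1 ≤ n) (hnN : n ≤ N) :
    (n, a n) ∈ S :=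
  (hS.mem_iff n hn hnN _).2 ⟨le_rfl, hS.le n hn hnN⟩

theorem not_columnLt_self (hS : IsStaircase N S a b) (hN : 1 ≤ N) : ¬ ColumnLt S S :=
  fun h => lt_irrefl _ (h _ (hS.mem_bot le_rfl hN) _ (hS.mem_bot le_rfl hN) rfl)

theorem columnLt_trans (hT : IsStaircase N T a b) (hSN : ∀ P ∈ S, 1 ≤ P.1 ∧ P.1 ≤ N)
    (hST : ColumnLt S T) (hTU : ColumnLt T U) : ColumnLt S U := by
  intro P hP Q hQ hPQ
  have hmid := hT.mem_bot (hSN P hP).1 (hSN P hP).2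
  exact (hST P hP _ hmid rfl).trans (hTU _ hmid Q hQ hPQ)

theorem lt_or_lt_of_disjoint (hS : IsStaircase N S a b) (hT : IsStaircase N T a' b')
    (hST : Disjoint S T) {n : ℕ} (hn : 1 ≤ n) (hnN : n ≤ N) : b n < a' n ∨ b' n < a n := by
  by_contra! h
  have hS' := (hS.mem_iff n hn hnN (max (a n) (a' n))).2
    ⟨le_max_left .., max_le (hS.le n hn hnN) h.1⟩
  have hT' := (hT.mem_iff n hn hnN (max (a n) (a' n))).2
    ⟨le_max_right .., max_le h.2 (hT.le n hn hnN)⟩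
  exact Set.disjoint_left.mp hST hS' hT'

theorem columnLt_of_disjoint (hS : IsStaircase N S a b) (hT : IsStaircase N T a' b')
    (hST : Disjoint S T) (h₁ : b 1 < a' 1) : ColumnLt S T := by
  have below : ∀ n, 1 ≤ n → n ≤ N → b n < a' n := by
    intro n hn
    induction n, hn using Nat.le_induction with
    | base => exact fun _ => h₁
    | succ n hn ih =>
      intro hnN
      have := hS.succ_eq n hn hnN
      have := hT.succ_eq n hn hnN
      have := hT.le n hn (by omega)
      have := hT.le (n + 1) (by omega) hnN
      have := ih (by omega)
      rcases hS.lt_or_lt_of_disjoint hT hST (by omega : 1 ≤ n + 1) hnN with h | h <;> omega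
  intro P hP Q hQ hPQ
  obtain ⟨hP₁, hPN⟩ := hS.fst_mem P hP
  have hPb := ((hS.mem_iff P.1 hP₁ hPN P.2).1 hP).2
  have hQa := ((hT.mem_iff P.1 hP₁ hPN Q.2).1 (by rw [hPQ]; exact hQ)).1
  have := below P.1 hP₁ hPN
  omega

theorem columnLt_or_columnLt_of_disjoint (hS : IsStaircase N S a b) (hT : IsStaircase N T a' b')
    (hN : 1 ≤ N) (hST : Disjoint S T) : ColumnLt S T ∨ ColumnLt T S :=
  (hS.lt_or_lt_of_disjoint hT hST le_rfl hN).imp (hS.columnLt_of_disjoint hT hST)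
    (hT.columnLt_of_disjoint hS hST.symm)

end IsStaircase

theorem exists_equiv_fin_of_isStrictTotalOrder {α : Type*} [Fintype α] (r : α → α → Prop)
    [IsStrictTotalOrder α r] {n : ℕ} (hn : Fintype.card α = n) :
    ∃ e : Fin n ≃ α, ∀ i j, i < j → r (e i) (e j) := by
  classical
  let := linearOrderOfSTO r
  let e := Fintype.orderIsoFinOfCardEq α hn
  exact ⟨e.toEquiv, fun _ _ h => e.strictMono h⟩

/-- Paths are indexed from `1`. Both indices are junk when the path does not visit column `n`. -/
noncomputable def firstIndex (π : ℕ → ℕ × ℕ) (n : ℕ) : ℕ :=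
  sInf {i | 1 ≤ i ∧ (π i).1 = n}

def lastIndex (p : ℕ) (π : ℕ → ℕ × ℕ) (n : ℕ) : ℕ :=
  Nat.findGreatest (fun i => (π i).1 = n) p

theorem firstIndex_spec {π : ℕ → ℕ × ℕ} {i n : ℕ} (hi : 1 ≤ i) (hin : (π i).1 = n) :
    1 ≤ firstIndex π n ∧ (π (firstIndex π n)).1 = n ∧ firstIndex π n ≤ i :=
  have hmem := Nat.sInf_mem (s := {i | 1 ≤ i ∧ (π i).1 = n}) ⟨i, hi, hin⟩
  ⟨hmem.1, hmem.2, Nat.sInf_le ⟨hi, hin⟩⟩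

theorem lastIndex_spec {p : ℕ} {π : ℕ → ℕ × ℕ} {i n : ℕ} (hip : i ≤ p)
    (hi : (π i).1 = n) :
    (π (lastIndex p π n)).1 = n ∧ i ≤ lastIndex p π n ∧ lastIndex p π n ≤ p :=
  ⟨Nat.findGreatest_spec (P := fun i => (π i).1 = n) hip hi, Nat.le_findGreatest hip hi,
    Nat.findGreatest_le p⟩

namespace IsUpRightPath

variable {N k p : ℕ} {π : ℕ → ℕ × ℕ}

theorem step_succ (H : IsUpRightPath N k p π) {i : ℕ} (hi : 1 ≤ i) (hip : i + 1 ≤ p) :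
    ((π (i + 1)).1 = (π i).1 + 1 ∧ (π (i + 1)).2 = (π i).2) ∨
      ((π (i + 1)).1 = (π i).1 ∧ (π (i + 1)).2 = (π i).2 + 1) := by
  simpa using H.2 (i + 1) (by omega) hip

theorem monotoneOn (H : IsUpRightPath N k p π) : MonotoneOn π (Set.Icc 1 p) := by
  refine monotoneOn_of_le_succ Set.ordConnected_Icc fun i _ hi hi' => ?_
  simp only [Order.succ_eq_add_one, Set.mem_Icc] at hi hi' ⊢
  rw [Prod.le_def]
  rcases H.step_succ hi.1 hi'.2 with h | h <;> omega

theorem apply_add_of_fst_eq (H : IsUpRightPath N k p π) {i j : ℕ} (hi : 1 ≤ i) (hjp : j ≤ p)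
    (hij : (π j).1 = (π i).1) : ∀ t ≤ j - i, π (i + t) = ((π i).1, (π i).2 + t) := by
  intro t ht
  induction t with
  | zero => rfl
  | succ t ih =>
    obtain ⟨hfst, hsnd⟩ := Prod.ext_iff.1 (ih (by omega))
    have hmono :=
      (H.monotoneOn ⟨by omega, by omega⟩ ⟨by omega, hjp⟩ (by omega : i + t + 1 ≤ j)).1
    rw [← add_assoc]
    rcases H.step_succ (by omega : 1 ≤ i + t) (by omega) with h | h
    · simp only at hfst; omega
    · exact Prod.ext (h.1.trans hfst) (by simp only at hsnd ⊢; omega)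

theorem apply_lastIndex_add_one (H : IsUpRightPath N k p π) (he : (π p).1 = N) {i n : ℕ}
    (hi : 1 ≤ i) (hip : i ≤ p) (hin : (π i).1 = n) (hnN : n < N) :
    lastIndex p π n + 1 ≤ p ∧
      π (lastIndex p π n + 1) = (n + 1, (π (lastIndex p π n)).2) := by
  obtain ⟨hg, hig, hgp⟩ := lastIndex_spec hip hin
  have hgp' : lastIndex p π n + 1 ≤ p := by
    by_contra h
    have : lastIndex p π n = p := by omega
    rw [this, he] at hg
    omega
  have hmax : (π (lastIndex p π n + 1)).1 ≠ n :=
    Nat.findGreatest_is_greatest (P := fun i => (π i).1 = n) (Nat.lt_succ_self _) hgp'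
  refine ⟨hgp', ?_⟩
  rcases H.step_succ (by omega) hgp' with h | h
  · exact Prod.ext (by omega) h.2
  · exact absurd (h.1.trans hg) hmax

theorem exists_fst_eq (H : IsUpRightPath N k p π) (hp : 1 ≤ p) (hs : (π 1).1 = 1)
    (he : (π p).1 = N) {n : ℕ} (hn : 1 ≤ n) (hnN : n ≤ N) :
    ∃ i, 1 ≤ i ∧ i ≤ p ∧ (π i).1 = n := by
  induction n, hn using Nat.le_induction with
  | base => exact ⟨1, le_rfl, hp, hs⟩
  | succ n hn ih =>
    obtain ⟨i, hi, hip, hin⟩ := ih (by omega)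
    obtain ⟨hgp, hg⟩ := H.apply_lastIndex_add_one he hi hip hin (by omega)
    exact ⟨_, by omega, hgp, by rw [hg]⟩

theorem mem_pathSupport_iff (H : IsUpRightPath N k p π) {i n : ℕ} (hi : 1 ≤ i) (hip : i ≤ p)
    (hin : (π i).1 = n) (y : ℕ) :
    (n, y) ∈ pathSupport p π ↔
      (π (firstIndex π n)).2 ≤ y ∧ y ≤ (π (lastIndex p π n)).2 := by
  obtain ⟨hf, hfn, hfi⟩ := firstIndex_spec hi hin
  obtain ⟨hgn, hig, hgp⟩ := lastIndex_spec hip hin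
  constructor
  · rintro ⟨j, ⟨hj, hjp⟩, hjy⟩
    have hjn : (π j).1 = n := by rw [hjy]
    have hlo := (H.monotoneOn ⟨hf, by omega⟩ ⟨hj, hjp⟩ (firstIndex_spec hj hjn).2.2).2
    have hhi := (H.monotoneOn ⟨hj, hjp⟩ ⟨by omega, hgp⟩ (lastIndex_spec hjp hjn).2.1).2
    rw [hjy] at hlo hhi
    exact ⟨hlo, hhi⟩
  · rintro ⟨hy₁, hy₂⟩
    have hvert := H.apply_add_of_fst_eq hf hgp (hgn.trans hfn.symm)
    have hlast := hvert _ le_rfl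
    rw [Nat.add_sub_cancel' (hfi.trans hig)] at hlast
    rw [hlast] at hy₂
    refine ⟨firstIndex π n + (y - (π (firstIndex π n)).2), ⟨by omega, by omega⟩, ?_⟩
    rw [hvert _ (by omega), hfn, Nat.add_sub_cancel' hy₁]

theorem firstIndex_add_one (H : IsUpRightPath N k p π) (he : (π p).1 = N) {i n : ℕ}
    (hi : 1 ≤ i) (hip : i ≤ p) (hin : (π i).1 = n) (hnN : n < N) :
    firstIndex π (n + 1) = lastIndex p π n + 1 := by
  obtain ⟨-, hexit⟩ := H.apply_lastIndex_add_one he hi hip hin hnN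
  obtain ⟨hgn, hig, hgp⟩ := lastIndex_spec hip hin
  have hentry : (π (lastIndex p π n + 1)).1 = n + 1 := by rw [hexit]
  obtain ⟨hf', hfn', hfle⟩ := firstIndex_spec (by omega) hentry
  refine le_antisymm hfle (Nat.lt_of_not_le fun h => ?_)
  have := (H.monotoneOn ⟨hf', by omega⟩ ⟨by omega, hgp⟩ h).1
  omega

theorem isStaircase (H : IsUpRightPath N k p π) (hp : 1 ≤ p) (hs : (π 1).1 = 1)
    (he : (π p).1 = N) :
    IsStaircase N (pathSupport p π) (fun n => (π (firstIndex π n)).2)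
      (fun n => (π (lastIndex p π n)).2) := by
  refine ⟨?_, fun n hn hnN => ?_, fun n hn hnN => ?_, fun n hn hnN => ?_⟩
  · rintro _ ⟨i, ⟨hi, hip⟩, rfl⟩
    exact (H.1 i hi hip).1
  · obtain ⟨i, hi, hip, hin⟩ := H.exists_fst_eq hp hs he hn hnN
    have h := (H.mem_pathSupport_iff hi hip hin (π i).2).1 ⟨i, ⟨hi, hip⟩, Prod.ext hin rfl⟩
    exact h.1.trans h.2
  · obtain ⟨i, hi, hip, hin⟩ := H.exists_fst_eq hp hs he hn hnN
    exact H.mem_pathSupport_iff hi hip hin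
  · obtain ⟨i, hi, hip, hin⟩ := H.exists_fst_eq hp hs he hn (by omega)
    obtain ⟨-, hexit⟩ := H.apply_lastIndex_add_one he hi hip hin (by omega)
    simp only [H.firstIndex_add_one he hi hip hin (by omega), hexit]

end IsUpRightPath

theorem upRightPaths_reindex_ordered_general
    (N k ℓ : ℕ) (hN : 1 ≤ N)
    (pl : Fin ℓ → ℕ) (π : Fin ℓ → ℕ → ℕ × ℕ)
    (hpl : ∀ r, 1 ≤ pl r)
    (hπ : ∀ r, IsUpRightPath N k (pl r) (π r))
    (hstart : ∀ r, (π r 1).1 = 1)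
    (hend : ∀ r, (π r (pl r)).1 = N)
    (hdisj : ∀ r s, r ≠ s → Disjoint (pathSupport (pl r) (π r)) (pathSupport (pl s) (π s))) :
    ∃ σ : Equiv.Perm (Fin ℓ),
      ∀ r s : Fin ℓ, r < s → PathLt (pl (σ r)) (π (σ r)) (pl (σ s)) (π (σ s)) := by
  have hS r := (hπ r).isStaircase (hpl r) (hstart r) (hend r)
  let R r s := ColumnLt (pathSupport (pl r) (π r)) (pathSupport (pl s) (π s))
  have : IsStrictTotalOrder (Fin ℓ) R :=
    { irrefl r := (hS r).not_columnLt_self hN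
      trans r s _ := (hS s).columnLt_trans (hS r).fst_mem
      trichotomous r s hrs hsr := by_contra fun h =>
        ((hS r).columnLt_or_columnLt_of_disjoint (hS s) hN (hdisj r s h)).elim hrs hsr }
  exact exists_equiv_fin_of_isStrictTotalOrder R (Fintype.card_fin ℓ)

/-- A family of `ℓ ≤ k` up-right paths in `{1,…,N} × {1,…,k}` with pairwise
disjoint supports, starting abscissas all `1` and ending abscissas all `N`, can
be re-indexed so that `π₁ < π₂ < ⋯ < π_ℓ`. -/
theorem upRightPaths_reindex_ordered
    (N k ℓ : ℕ) (hN : 1 ≤ N) (hℓ : 1 ≤ ℓ) (hℓk : ℓ ≤ k)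
    (pl : Fin ℓ → ℕ) (π : Fin ℓ → ℕ → ℕ × ℕ)
    (hpl : ∀ r, 1 ≤ pl r)
    (hπ : ∀ r, IsUpRightPath N k (pl r) (π r))
    (hstart : ∀ r, (π r 1).1 = 1)
    (hend : ∀ r, (π r (pl r)).1 = N)
    (hdisj : ∀ r s, r ≠ s → Disjoint (pathSupport (pl r) (π r)) (pathSupport (pl s) (π s))) :
    ∃ σ : Equiv.Perm (Fin ℓ),
      ∀ r s : Fin ℓ, r < s → PathLt (pl (σ r)) (π (σ r)) (pl (σ s)) (π (σ s)) :=
  upRightPaths_reindex_ordered_general N k ℓ hN pl π hpl hπ hstart hend hdisj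
end

section
/- Let w = (w_{ij}) be a non-negative real array indexed by {1,…,N}×{1,…,k}, and let 1 ≤ ℓ ≤ k. Then the maximum of Σ_{r=1}^ℓ Σ_{(i,j)∈support(π_r)} w_{ij} over all collections of ℓ up-right paths with pairwise disjoint supports equals the maximum over the smaller class of collections π₁ < ⋯ < π_ℓ of up-right paths whose starting abscissas are all 1 and ending abscissas are all N. -/
/-- The total weight of a path: the sum of `w` over its support. -/
noncomputable def pathWeight (w : ℕ → ℕ → ℝ) (p : ℕ) (π : ℕ → ℕ × ℕ) : ℝ :=
  ∑ P ∈ (Finset.Icc 1 p).image π, w P.1 P.2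

/-! ### Auxiliary lemmas on up-right paths -/

lemma path_mono {N k p : ℕ} {π : ℕ → ℕ × ℕ} (hπ : IsUpRightPath N k p π)
    {i j : ℕ} (hi : 1 ≤ i) (hij : i ≤ j) (hjp : j ≤ p) :
    (π i).1 ≤ (π j).1 ∧ (π i).2 ≤ (π j).2 := by
  induction j with
  | zero => omega
  | succ m ih =>
    rcases eq_or_lt_of_le hij with h | h
    · rw [h]; exact ⟨le_rfl, le_rfl⟩
    · have him : i ≤ m := by omega
      have hmp : m ≤ p := by omega
      have ih' := ih him hmp
      have hstep := hπ.2 (m+1) (by omega) hjp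
      simp only [Nat.add_sub_cancel] at hstep
      rcases hstep with ⟨h1, h2⟩ | ⟨h1, h2⟩ <;> exact ⟨by omega, by omega⟩

/-- index of the last point of the path in column `≤ n` (or `1` if none). -/
def phiIdx (p : ℕ) (π : ℕ → ℕ × ℕ) (n : ℕ) : ℕ :=
  max 1 (((Finset.Icc 1 p).filter fun j => (π j).1 ≤ n).sup id)

lemma phiIdx_mem (p : ℕ) (π : ℕ → ℕ × ℕ) (n : ℕ) (hp : 1 ≤ p) :
    1 ≤ phiIdx p π n ∧ phiIdx p π n ≤ p := by
  unfold phiIdx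
  rcases ((Finset.Icc 1 p).filter fun j => (π j).1 ≤ n).eq_empty_or_nonempty with he | hne
  · rw [he]; simp; omega
  · obtain ⟨b, hb, hsup⟩ := Finset.exists_mem_eq_sup _ hne id
    rw [hsup]
    simp only [Finset.mem_filter, Finset.mem_Icc] at hb
    simp only [id]
    omega

lemma phiIdx_ge (p : ℕ) (π : ℕ → ℕ × ℕ) (n j : ℕ) (hj : 1 ≤ j) (hjp : j ≤ p)
    (hcol : (π j).1 ≤ n) : j ≤ phiIdx p π n := by
  have h1 : j ∈ (Finset.Icc 1 p).filter fun j => (π j).1 ≤ n := by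
    simp only [Finset.mem_filter, Finset.mem_Icc]; exact ⟨⟨hj, hjp⟩, hcol⟩
  have := Finset.le_sup (f := id) h1
  unfold phiIdx
  simp only [id] at this ⊢
  omega

lemma phiIdx_col (p : ℕ) (π : ℕ → ℕ × ℕ) (n : ℕ)
    (hne : (((Finset.Icc 1 p).filter fun j => (π j).1 ≤ n)).Nonempty) :
    (π (phiIdx p π n)).1 ≤ n := by
  obtain ⟨b, hb, hsup⟩ := Finset.exists_mem_eq_sup _ hne id
  have hb' := hb
  simp only [Finset.mem_filter, Finset.mem_Icc] at hb'
  have : phiIdx p π n = b := by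
    unfold phiIdx; rw [hsup]; simp only [id]; omega
  rw [this]
  exact hb'.2

/-- top height of the path in column `n` (with constant extension). -/
def topF (p : ℕ) (π : ℕ → ℕ × ℕ) (n : ℕ) : ℕ := (π (phiIdx p π n)).2

lemma topF_mono {N k p : ℕ} {π : ℕ → ℕ × ℕ} (hπ : IsUpRightPath N k p π) (hp : 1 ≤ p) :
    Monotone (topF p π) := by
  intro n n' hnn'
  have h1 := phiIdx_mem p π n hp
  have h2 := phiIdx_mem p π n' hp
  have hle : phiIdx p π n ≤ phiIdx p π n' := by
    have hsub : ((Finset.Icc 1 p).filter fun j => (π j).1 ≤ n) ⊆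
        ((Finset.Icc 1 p).filter fun j => (π j).1 ≤ n') := by
      intro a ha
      simp only [Finset.mem_filter, Finset.mem_Icc] at ha ⊢
      exact ⟨ha.1, le_trans ha.2 hnn'⟩
    unfold phiIdx
    exact max_le_max le_rfl (Finset.sup_mono hsub)
  exact (path_mono hπ h1.1 hle h2.2).2

lemma topF_bounds {N k p : ℕ} {π : ℕ → ℕ × ℕ} (hπ : IsUpRightPath N k p π) (hp : 1 ≤ p)
    (n : ℕ) : 1 ≤ topF p π n ∧ topF p π n ≤ k := by
  have h := phiIdx_mem p π n hp
  exact (hπ.1 _ h.1 h.2).2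

lemma topF_support {N k p : ℕ} {π : ℕ → ℕ × ℕ} (hπ : IsUpRightPath N k p π) (hp : 1 ≤ p)
    {i : ℕ} (hi : 1 ≤ i) (hip : i ≤ p) :
    topF p π ((π i).1 - 1) ≤ (π i).2 ∧ (π i).2 ≤ topF p π ((π i).1) := by
  constructor
  · rcases ((Finset.Icc 1 p).filter fun j => (π j).1 ≤ (π i).1 - 1).eq_empty_or_nonempty with he | hne
    · have h1 : phiIdx p π ((π i).1 - 1) = 1 := by
        unfold phiIdx; rw [he]; simp
      unfold topF; rw [h1]
      exact (path_mono hπ le_rfl hi hip).2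
    · have hφmem := phiIdx_mem p π ((π i).1 - 1) hp
      have hφcol := phiIdx_col p π ((π i).1 - 1) hne
      set φ := phiIdx p π ((π i).1 - 1) with hφ
      have hcoli : 1 ≤ (π i).1 := ((hπ.1 i hi hip).1).1
      have hφi : φ < i := by
        by_contra hcon
        push_neg at hcon
        have := (path_mono hπ hi hcon hφmem.2).1
        omega
      have hstep := hπ.2 (φ+1) (by omega) (by omega)
      simp only [Nat.add_sub_cancel] at hstep
      rcases hstep with ⟨h1, h2⟩ | ⟨h1, h2⟩
      · have hy := (path_mono hπ (by omega : 1 ≤ φ+1) (by omega : φ+1 ≤ i) hip).2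
        unfold topF
        rw [← hφ]
        omega
      · exfalso
        have : φ + 1 ≤ φ := by
          rw [hφ]
          exact phiIdx_ge p π _ (φ+1) (by omega) (by omega) (by omega)
        omega
  · have h1 : i ≤ phiIdx p π ((π i).1) := phiIdx_ge p π _ i hi hip le_rfl
    exact (path_mono hπ hi h1 (phiIdx_mem p π _ hp).2).2

/-! ### Order statistics of profiles -/

/-- `r`-th smallest (1-indexed) value among `b 1 n, …, b ℓ n`. -/
noncomputable def cF (ℓ : ℕ) (b : ℕ → ℕ → ℕ) (r n : ℕ) : ℕ :=
  sInf {h | r ≤ (((Finset.Icc 1 ℓ).filter fun s => b s n ≤ h)).card}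

section cFLemmas
variable {k ℓ : ℕ} {b : ℕ → ℕ → ℕ}

lemma cF_spec (hbk : ∀ s n, b s n ≤ k) {r : ℕ} (hr : r ≤ ℓ) (n : ℕ) :
    r ≤ (((Finset.Icc 1 ℓ).filter fun s => b s n ≤ cF ℓ b r n)).card := by
  have hk : k ∈ {h | r ≤ (((Finset.Icc 1 ℓ).filter fun s => b s n ≤ h)).card} := by
    simp only [Set.mem_setOf_eq]
    have he : (Finset.Icc 1 ℓ).filter (fun s => b s n ≤ k) = Finset.Icc 1 ℓ :=
      Finset.filter_true_of_mem (fun s _ => hbk s n)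
    rw [he, Nat.card_Icc]; omega
  exact Nat.sInf_mem ⟨k, hk⟩

lemma cF_le {r n h : ℕ} (hh : r ≤ (((Finset.Icc 1 ℓ).filter fun s => b s n ≤ h)).card) :
    cF ℓ b r n ≤ h :=
  Nat.sInf_le hh

lemma cF_pos (hbk : ∀ s n, b s n ≤ k) (hb1 : ∀ s n, 1 ≤ b s n)
    {r : ℕ} (hr1 : 1 ≤ r) (hr : r ≤ ℓ) (n : ℕ) : 1 ≤ cF ℓ b r n := by
  by_contra hcon
  push_neg at hcon
  have h0 : cF ℓ b r n = 0 := by omega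
  have hs := cF_spec hbk hr n (b := b)
  rw [h0] at hs
  have he : (Finset.Icc 1 ℓ).filter (fun s => b s n ≤ 0) = ∅ :=
    Finset.filter_eq_empty_iff.2 (fun {s} _ => by have := hb1 s n; omega)
  rw [he] at hs
  simp at hs
  omega

lemma cF_le_k (hbk : ∀ s n, b s n ≤ k) {r : ℕ} (hr : r ≤ ℓ) (n : ℕ) : cF ℓ b r n ≤ k := by
  apply cF_le
  have he : (Finset.Icc 1 ℓ).filter (fun s => b s n ≤ k) = Finset.Icc 1 ℓ :=
    Finset.filter_true_of_mem (fun s _ => hbk s n)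
  rw [he, Nat.card_Icc]; omega

lemma cF_eq_zero {r n : ℕ} (hr : ℓ < r) : cF ℓ b r n = 0 := by
  unfold cF
  convert Nat.sInf_empty
  ext h
  simp only [Set.mem_setOf_eq, Set.mem_empty_iff_false, iff_false, not_le]
  have h1 := Finset.card_filter_le (Finset.Icc 1 ℓ) (fun s => b s n ≤ h)
  rw [Nat.card_Icc] at h1
  omega

lemma cF_mono_n (hbk : ∀ s n, b s n ≤ k) (hbm : ∀ s, Monotone (b s)) (r : ℕ) :
    Monotone (cF ℓ b r) := by
  intro n n' hnn'
  rcases le_or_gt r ℓ with hr | hr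
  · apply cF_le
    refine le_trans (cF_spec hbk hr n') (Finset.card_le_card ?_)
    intro s hs
    simp only [Finset.mem_filter, Finset.mem_Icc] at hs ⊢
    exact ⟨hs.1, le_trans (hbm s hnn') hs.2⟩
  · rw [cF_eq_zero hr, cF_eq_zero hr]

lemma cF_mono_r (hbk : ∀ s n, b s n ≤ k) {r r' : ℕ} (hrr' : r ≤ r') (hr' : r' ≤ ℓ) (n : ℕ) :
    cF ℓ b r n ≤ cF ℓ b r' n :=
  cF_le (le_trans hrr' (cF_spec hbk hr' n))

lemma cF_cover (hbk : ∀ s n, b s n ≤ k) (hbm : ∀ s, Monotone (b s))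
    {s n h : ℕ} (hs1 : 1 ≤ s) (hsℓ : s ≤ ℓ)
    (h1 : b s (n-1) ≤ h) (h2 : h ≤ b s n) :
    ∃ r, 1 ≤ r ∧ r ≤ ℓ ∧ cF ℓ b r (n-1) ≤ h ∧ h ≤ cF ℓ b r n := by
  classical
  set R := (Finset.Icc 1 ℓ).filter (fun r' => cF ℓ b r' (n-1) ≤ h) with hR
  have h1R : (1:ℕ) ∈ R := by
    simp only [hR, Finset.mem_filter, Finset.mem_Icc]
    refine ⟨⟨le_rfl, by omega⟩, ?_⟩
    apply cF_le
    have hsmem : s ∈ (Finset.Icc 1 ℓ).filter (fun s' => b s' (n-1) ≤ h) := by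
      simp only [Finset.mem_filter, Finset.mem_Icc]; exact ⟨⟨hs1, hsℓ⟩, h1⟩
    have := Finset.card_pos.2 ⟨s, hsmem⟩
    omega
  obtain ⟨r, hrR, hrsup⟩ := Finset.exists_mem_eq_sup R ⟨1, h1R⟩ id
  have hrR' := hrR
  simp only [hR, Finset.mem_filter, Finset.mem_Icc] at hrR'
  refine ⟨r, hrR'.1.1, hrR'.1.2, hrR'.2, ?_⟩
  by_contra hcon
  push_neg at hcon
  have hA := cF_spec hbk hrR'.1.2 n (b := b)
  have hsub : (Finset.Icc 1 ℓ).filter (fun s' => b s' n ≤ cF ℓ b r n) ⊆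
      (Finset.Icc 1 ℓ).filter (fun s' => b s' (n-1) ≤ h) := by
    intro a ha
    simp only [Finset.mem_filter, Finset.mem_Icc] at ha ⊢
    exact ⟨ha.1, le_trans (le_trans (hbm a (by omega : n - 1 ≤ n)) ha.2) (le_of_lt hcon)⟩
  have hsmemB : s ∈ (Finset.Icc 1 ℓ).filter (fun s' => b s' (n-1) ≤ h) := by
    simp only [Finset.mem_filter, Finset.mem_Icc]; exact ⟨⟨hs1, hsℓ⟩, h1⟩
  have hsnotA : s ∉ (Finset.Icc 1 ℓ).filter (fun s' => b s' n ≤ cF ℓ b r n) := by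
    simp only [Finset.mem_filter, Finset.mem_Icc, not_and]
    intro _
    omega
  have hcard : ((Finset.Icc 1 ℓ).filter (fun s' => b s' n ≤ cF ℓ b r n)).card <
      ((Finset.Icc 1 ℓ).filter (fun s' => b s' (n-1) ≤ h)).card := by
    apply Finset.card_lt_card
    exact (Finset.ssubset_iff_of_subset hsub).2 ⟨s, hsmemB, hsnotA⟩
  have hBl : ((Finset.Icc 1 ℓ).filter (fun s' => b s' (n-1) ≤ h)).card ≤ ℓ := by
    have := Finset.card_filter_le (Finset.Icc 1 ℓ) (fun s' => b s' (n-1) ≤ h)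
    rw [Nat.card_Icc] at this; omega
  have hc2 : cF ℓ b (r+1) (n-1) ≤ h := cF_le (by omega)
  have hmem : r + 1 ∈ R := by
    simp only [hR, Finset.mem_filter, Finset.mem_Icc]
    exact ⟨⟨by omega, by omega⟩, hc2⟩
  have := Finset.le_sup (f := id) hmem
  rw [hrsup] at this
  simp only [id] at this
  omega

end cFLemmas

/-! ### Spreading the sorted profiles apart -/

/-- downward recursion used to spread sorted profiles apart. -/
noncomputable def gF (c : ℕ → ℕ → ℕ) (ℓ : ℕ) : ℕ → ℕ → ℕ
  | 0, n => c ℓ n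
  | j+1, n => min (c (ℓ - (j+1)) n) (gF c ℓ j (n-1) - 1)

noncomputable def dF (c : ℕ → ℕ → ℕ) (ℓ r n : ℕ) : ℕ := max r (gF c ℓ (ℓ - r) n)

section dFLemmas
variable {k ℓ : ℕ} {c : ℕ → ℕ → ℕ}

lemma gF_mono (hc : ∀ t, Monotone (c t)) (j : ℕ) : Monotone (gF c ℓ j) := by
  induction j with
  | zero => intro a b h; simpa only [gF] using hc ℓ h
  | succ j ih =>
    intro a b h
    simp only [gF]
    exact min_le_min (hc _ h) (Nat.sub_le_sub_right (ih (by omega)) 1)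

lemma gF_le (j n : ℕ) : gF c ℓ j n ≤ c (ℓ - j) n := by
  cases j with
  | zero => simp [gF]
  | succ j => exact min_le_left _ _

lemma gF_rec {r : ℕ} (hr1 : 1 ≤ r) (hrℓ : r < ℓ) (n : ℕ) :
    gF c ℓ (ℓ - r) n = min (c r n) (gF c ℓ (ℓ - (r+1)) (n-1) - 1) := by
  have h1 : ℓ - r = (ℓ - (r+1)) + 1 := by omega
  rw [h1]
  simp only [gF]
  have h2 : ℓ - (ℓ - (r+1) + 1) = r := by omega
  rw [h2]

lemma dF_lb (r n : ℕ) : r ≤ dF c ℓ r n := le_max_left _ _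

lemma dF_mono (hc : ∀ t, Monotone (c t)) (r : ℕ) : Monotone (dF c ℓ r) :=
  fun _ _ h => max_le_max le_rfl (gF_mono hc _ h)

lemma dF_ub {r n : ℕ} (hrk : r ≤ k) (hr : r ≤ ℓ) (hck : c r n ≤ k) : dF c ℓ r n ≤ k := by
  have h1 := gF_le (c := c) (ℓ := ℓ) (ℓ - r) n
  have h2 : ℓ - (ℓ - r) = r := by omega
  rw [h2] at h1
  unfold dF
  omega

lemma dF_succ_lt {r n : ℕ} (hr1 : 1 ≤ r) (hrs : r + 1 ≤ ℓ) :
    dF c ℓ r n < dF c ℓ (r+1) (n-1) := by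
  have hrec := gF_rec (c := c) (ℓ := ℓ) hr1 (show r < ℓ by omega) n
  unfold dF
  rw [hrec]
  omega

lemma dF_lt (hc : ∀ t, Monotone (c t)) {r s n : ℕ} (hr1 : 1 ≤ r) (hrs : r < s) :
    s ≤ ℓ → dF c ℓ r n < dF c ℓ s (n-1) := by
  induction s, hrs using Nat.le_induction with
  | base => intro h; exact dF_succ_lt hr1 h
  | succ m hm ih =>
    intro hml
    have h1 := ih (by omega)
    have h2 : dF c ℓ m (n-1) ≤ dF c ℓ m n := dF_mono hc m (by omega)
    have h3 : dF c ℓ m n < dF c ℓ (m+1) (n-1) := dF_succ_lt (by omega) hml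
    omega

lemma dF_cover (hc : ∀ t, Monotone (c t))
    (hcr : ∀ t t' n', t ≤ t' → t' ≤ ℓ → c t n' ≤ c t' n')
    {r n h : ℕ} (hr1 : 1 ≤ r) (hrl : r ≤ ℓ) (hh0 : 1 ≤ h)
    (hh1 : c r (n-1) ≤ h) (hh2 : h ≤ c r n) :
    ∃ r', 1 ≤ r' ∧ r' ≤ ℓ ∧ dF c ℓ r' (n-1) ≤ h ∧ h ≤ dF c ℓ r' n := by
  classical
  set R := (Finset.Icc 1 ℓ).filter (fun t => dF c ℓ t (n-1) ≤ h) with hR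
  have h1R : (1:ℕ) ∈ R := by
    simp only [hR, Finset.mem_filter, Finset.mem_Icc]
    refine ⟨⟨le_rfl, by omega⟩, ?_⟩
    have hg : gF c ℓ (ℓ - 1) (n-1) ≤ c 1 (n-1) := by
      have h1 := gF_le (c := c) (ℓ := ℓ) (ℓ - 1) (n-1)
      have h2 : ℓ - (ℓ - 1) = 1 := by omega
      rwa [h2] at h1
    have hcc : c 1 (n-1) ≤ c r (n-1) := hcr 1 r _ hr1 hrl
    unfold dF
    omega
  obtain ⟨r', hr'R, hsup⟩ := Finset.exists_mem_eq_sup R ⟨1, h1R⟩ id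
  have hr'R' := hr'R
  simp only [hR, Finset.mem_filter, Finset.mem_Icc] at hr'R'
  refine ⟨r', hr'R'.1.1, hr'R'.1.2, hr'R'.2, ?_⟩
  by_contra hcon
  push_neg at hcon
  rcases eq_or_lt_of_le hr'R'.1.2 with heq | hlt
  · have e1 : dF c ℓ r' n = max r' (c ℓ n) := by
      unfold dF
      rw [heq]
      have h0 : ℓ - ℓ = 0 := by omega
      rw [h0]
      simp [gF]
    have h2 : h ≤ c ℓ n := le_trans hh2 (hcr r ℓ n hrl le_rfl)
    omega
  · have hmax : h < dF c ℓ (r'+1) (n-1) := by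
      by_contra hcon2
      push_neg at hcon2
      have hmem : r' + 1 ∈ R := by
        simp only [hR, Finset.mem_filter, Finset.mem_Icc]
        exact ⟨⟨by omega, by omega⟩, hcon2⟩
      have := Finset.le_sup (f := id) hmem
      rw [hsup] at this
      simp only [id] at this
      omega
    have hrec := gF_rec (c := c) (r := r') hr'R'.1.1 hlt n
    have hFle : gF c ℓ (ℓ - (r'+1)) (n-1) ≤ c (r'+1) (n-1) := by
      have h1 := gF_le (c := c) (ℓ := ℓ) (ℓ - (r'+1)) (n-1)
      have h2 : ℓ - (ℓ - (r'+1)) = r'+1 := by omega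
      rwa [h2] at h1
    have e1 : dF c ℓ r' n = max r' (min (c r' n) (gF c ℓ (ℓ - (r'+1)) (n-1) - 1)) := by
      unfold dF; rw [hrec]
    have e2 : dF c ℓ (r'+1) (n-1) = max (r'+1) (gF c ℓ (ℓ - (r'+1)) (n-1)) := rfl
    have e3 : r' ≤ dF c ℓ r' (n-1) := dF_lb r' (n-1)
    rcases le_or_gt r r' with hcase | hcase
    · have hcn : h ≤ c r' n := le_trans hh2 (hcr r r' n hcase hr'R'.1.2)
      omega
    · have hcc : c (r'+1) (n-1) ≤ c r (n-1) := hcr (r'+1) r _ (by omega) hrl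
      omega

end dFLemmas

/-! ### Building a path from a monotone profile -/

/-- column of the `i`-th point of the path built from profile `d`. -/
def nIdx (d : ℕ → ℕ) (N i : ℕ) : ℕ :=
  ((Finset.Icc 1 N).filter fun m => m + d (m-1) ≤ i + d 0).sup id

/-- the path built from a monotone profile `d`: in column `n` it covers heights
`d (n-1), …, d n`. -/
def bP (d : ℕ → ℕ) (N : ℕ) (i : ℕ) : ℕ × ℕ := (nIdx d N i, i + d 0 - nIdx d N i)

/-- length of the built path. -/
def pLen (d : ℕ → ℕ) (N : ℕ) : ℕ := N + d N - d 0

section bPLemmas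
variable {d : ℕ → ℕ} {N k : ℕ}

lemma nIdx_spec (hN : 1 ≤ N) {i : ℕ} (hi : 1 ≤ i) :
    (1 ≤ nIdx d N i ∧ nIdx d N i ≤ N) ∧
    nIdx d N i + d (nIdx d N i - 1) ≤ i + d 0 ∧
    (∀ m, 1 ≤ m → m ≤ N → m + d (m-1) ≤ i + d 0 → m ≤ nIdx d N i) := by
  have h1 : (1:ℕ) ∈ (Finset.Icc 1 N).filter fun m => m + d (m-1) ≤ i + d 0 := by
    simp only [Finset.mem_filter, Finset.mem_Icc]
    norm_num
    omega
  obtain ⟨b, hb, hsup⟩ := Finset.exists_mem_eq_sup _ ⟨1, h1⟩ id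
  have hnn : nIdx d N i = b := by unfold nIdx; rw [hsup]; rfl
  have hb' := hb
  simp only [Finset.mem_filter, Finset.mem_Icc] at hb'
  refine ⟨⟨by omega, by omega⟩, by rw [hnn]; exact hb'.2, ?_⟩
  intro m hm1 hm2 hm3
  have hmem : m ∈ (Finset.Icc 1 N).filter fun m => m + d (m-1) ≤ i + d 0 := by
    simp only [Finset.mem_filter, Finset.mem_Icc]
    exact ⟨⟨hm1, hm2⟩, hm3⟩
  have := Finset.le_sup (f := id) hmem
  unfold nIdx
  simp only [id] at this ⊢
  omega

lemma point_spec (hd : Monotone d) (hN : 1 ≤ N) {i : ℕ} (hi1 : 1 ≤ i) (hi2 : i ≤ pLen d N) :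
    (1 ≤ (bP d N i).1 ∧ (bP d N i).1 ≤ N) ∧
    d ((bP d N i).1 - 1) ≤ (bP d N i).2 ∧
    (bP d N i).2 ≤ d ((bP d N i).1) ∧
    (bP d N i).1 + (bP d N i).2 = i + d 0 := by
  obtain ⟨⟨hn1, hnN⟩, hle, hmax⟩ := nIdx_spec (d := d) hN hi1
  have hd0 : d 0 ≤ d (nIdx d N i - 1) := hd (Nat.zero_le _)
  have hni : nIdx d N i ≤ i := by omega
  have hton : i + d 0 ≤ nIdx d N i + d (nIdx d N i) := by
    rcases eq_or_lt_of_le hnN with he | hlt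
    · rw [he]
      have hdN : d 0 ≤ d N := hd (Nat.zero_le _)
      unfold pLen at hi2
      omega
    · by_contra hc
      push_neg at hc
      have h2 := hmax (nIdx d N i + 1) (by omega) (by omega)
      simp only [Nat.add_sub_cancel] at h2
      have := h2 (by omega)
      omega
  simp only [bP]
  refine ⟨⟨hn1, hnN⟩, by omega, by omega, by omega⟩

lemma bP_path (hd : Monotone d) (hN : 1 ≤ N)
    (hd1 : ∀ n, 1 ≤ d n) (hdk : ∀ n, d n ≤ k) :
    IsUpRightPath N k (pLen d N) (bP d N) := by
  constructor
  · intro i hi1 hi2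
    obtain ⟨⟨a, b⟩, c', e, f⟩ := point_spec hd hN hi1 hi2
    exact ⟨⟨a, b⟩, le_trans (hd1 _) c', le_trans e (hdk _)⟩
  · intro i hi1 hi2
    have p1 := point_spec hd hN (show 1 ≤ i by omega) hi2
    have p2 := point_spec hd hN (show 1 ≤ i - 1 by omega) (show i - 1 ≤ pLen d N by omega)
    obtain ⟨⟨hn1, hnN⟩, hle, hmax⟩ := nIdx_spec (d := d) hN (show 1 ≤ i by omega)
    obtain ⟨⟨hn1', hnN'⟩, hle', hmax'⟩ := nIdx_spec (d := d) hN (show 1 ≤ i - 1 by omega)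
    have hnn' : nIdx d N (i-1) ≤ nIdx d N i := by
      apply hmax _ hn1' hnN'
      omega
    have hstep2 : nIdx d N i ≤ nIdx d N (i-1) + 1 := by
      by_contra hcon
      push_neg at hcon
      have hd' : d (nIdx d N (i-1)) ≤ d (nIdx d N i - 1) := hd (by omega)
      have h1 : (bP d N (i-1)).2 ≤ d ((bP d N (i-1)).1) := p2.2.2.1
      have h2 : (bP d N (i-1)).1 + (bP d N (i-1)).2 = (i-1) + d 0 := p2.2.2.2
      simp only [bP] at h1 h2
      omega
    have e1 : (bP d N i).1 = nIdx d N i := rfl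
    have e1' : (bP d N (i-1)).1 = nIdx d N (i-1) := rfl
    have h4 := p1.2.2.2
    have h4' := p2.2.2.2
    have hcase : nIdx d N i = nIdx d N (i-1) ∨ nIdx d N i = nIdx d N (i-1) + 1 := by omega
    rw [e1] at h4
    rw [e1'] at h4'
    rcases hcase with hcase | hcase
    · exact Or.inr ⟨by rw [e1, e1', hcase], by omega⟩
    · exact Or.inl ⟨by rw [e1, e1', hcase], by omega⟩

lemma bP_start (hd : Monotone d) (hN : 1 ≤ N) : (bP d N 1).1 = 1 := by
  show nIdx d N 1 = 1
  apply le_antisymm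
  · unfold nIdx
    apply Finset.sup_le
    intro m hm
    simp only [Finset.mem_filter, Finset.mem_Icc] at hm
    have : d 0 ≤ d (m-1) := hd (Nat.zero_le _)
    simp only [id]
    omega
  · obtain ⟨⟨h1, _⟩, _, _⟩ := nIdx_spec (d := d) hN (le_refl 1)
    exact h1

lemma bP_end (hd : Monotone d) (hN : 1 ≤ N) (hpl : 1 ≤ pLen d N) :
    (bP d N (pLen d N)).1 = N := by
  show nIdx d N (pLen d N) = N
  obtain ⟨⟨h1, h2⟩, _, hmax⟩ := nIdx_spec (d := d) hN hpl
  have hdN : d 0 ≤ d N := hd (Nat.zero_le _)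
  have hdN1 : d (N-1) ≤ d N := hd (by omega)
  have := hmax N hN le_rfl (by unfold pLen; omega)
  omega

lemma bP_supp (hd : Monotone d) (hN : 1 ≤ N) {n h : ℕ}
    (hn1 : 1 ≤ n) (hnN : n ≤ N) (h1 : d (n-1) ≤ h) (h2 : h ≤ d n) :
    ∃ i, 1 ≤ i ∧ i ≤ pLen d N ∧ bP d N i = (n, h) := by
  have hd0 : d 0 ≤ d (n-1) := hd (Nat.zero_le _)
  have hdnN : d n ≤ d N := hd hnN
  refine ⟨n + h - d 0, by omega, by unfold pLen; omega, ?_⟩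
  have hnn : nIdx d N (n + h - d 0) = n := by
    apply le_antisymm
    · unfold nIdx
      apply Finset.sup_le
      intro m hm
      simp only [Finset.mem_filter, Finset.mem_Icc] at hm
      simp only [id]
      by_contra hc
      push_neg at hc
      have : d n ≤ d (m - 1) := hd (by omega)
      omega
    · unfold nIdx
      have hmem : n ∈ (Finset.Icc 1 N).filter fun m => m + d (m-1) ≤ (n + h - d 0) + d 0 := by
        simp only [Finset.mem_filter, Finset.mem_Icc]
        exact ⟨⟨hn1, hnN⟩, by omega⟩
      exact Finset.le_sup (f := id) hmem
  simp only [bP, hnn, Prod.mk.injEq, true_and]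
  omega

end bPLemmas

/-! ### Sums over supports -/

lemma pathSupport_eq (p : ℕ) (π : ℕ → ℕ × ℕ) :
    pathSupport p π = ↑((Finset.Icc 1 p).image π) := by
  rw [Finset.coe_image, Finset.coe_Icc]
  rfl

lemma pathLt_disjoint {p p' : ℕ} {π π' : ℕ → ℕ × ℕ} (hlt : PathLt p π p' π') :
    Disjoint (pathSupport p π) (pathSupport p' π') := by
  rw [Set.disjoint_left]
  intro P hP hP'
  exact absurd (hlt P hP P hP' rfl) (lt_irrefl _)

lemma sum_pathWeight_eq {ℓ : ℕ} (w : ℕ → ℕ → ℝ) (pl : Fin ℓ → ℕ) (π : Fin ℓ → ℕ → ℕ × ℕ)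
    (hdisj : ∀ r s, r ≠ s → Disjoint (pathSupport (pl r) (π r)) (pathSupport (pl s) (π s))) :
    ∑ r, pathWeight w (pl r) (π r) =
      ∑ P ∈ Finset.univ.biUnion (fun r => (Finset.Icc 1 (pl r)).image (π r)), w P.1 P.2 := by
  rw [Finset.sum_biUnion]
  · rfl
  · intro a _ b _ hab
    simp only [Function.onFun]
    have h := hdisj a b hab
    rw [pathSupport_eq, pathSupport_eq] at h
    exact Finset.disjoint_coe.1 h

/-! ### The main theorem -/

/-- For non-negative weights `w` on `{1,…,N} × {1,…,k}` and `1 ≤ ℓ ≤ k`, the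
supremum of the total weight over collections of `ℓ` up-right paths with pairwise
disjoint supports equals the supremum over the smaller class of collections
`π₁ < ⋯ < π_ℓ` with starting abscissas all `1` and ending abscissas all `N`. -/
theorem upRightPaths_max_weight_reduction
    (N k ℓ : ℕ) (hN : 1 ≤ N) (hℓ : 1 ≤ ℓ) (hℓk : ℓ ≤ k)
    (w : ℕ → ℕ → ℝ) (hw : ∀ i j, 0 ≤ w i j) :
    sSup {x : ℝ | ∃ (pl : Fin ℓ → ℕ) (π : Fin ℓ → ℕ → ℕ × ℕ),
        (∀ r, 1 ≤ pl r) ∧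
        (∀ r, IsUpRightPath N k (pl r) (π r)) ∧
        (∀ r s, r ≠ s → Disjoint (pathSupport (pl r) (π r)) (pathSupport (pl s) (π s))) ∧
        x = ∑ r, pathWeight w (pl r) (π r)} =
    sSup {x : ℝ | ∃ (pl : Fin ℓ → ℕ) (π : Fin ℓ → ℕ → ℕ × ℕ),
        (∀ r, 1 ≤ pl r) ∧
        (∀ r, IsUpRightPath N k (pl r) (π r)) ∧
        (∀ r, (π r 1).1 = 1) ∧
        (∀ r, (π r (pl r)).1 = N) ∧
        (∀ r s : Fin ℓ, r < s → PathLt (pl r) (π r) (pl s) (π s)) ∧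
        x = ∑ r, pathWeight w (pl r) (π r)} := by
  classical
  have hℓ0 : 0 < ℓ := hℓ
  set SA := {x : ℝ | ∃ (pl : Fin ℓ → ℕ) (π : Fin ℓ → ℕ → ℕ × ℕ),
        (∀ r, 1 ≤ pl r) ∧
        (∀ r, IsUpRightPath N k (pl r) (π r)) ∧
        (∀ r s, r ≠ s → Disjoint (pathSupport (pl r) (π r)) (pathSupport (pl s) (π s))) ∧
        x = ∑ r, pathWeight w (pl r) (π r)} with hSA
  set SB := {x : ℝ | ∃ (pl : Fin ℓ → ℕ) (π : Fin ℓ → ℕ → ℕ × ℕ),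
        (∀ r, 1 ≤ pl r) ∧
        (∀ r, IsUpRightPath N k (pl r) (π r)) ∧
        (∀ r, (π r 1).1 = 1) ∧
        (∀ r, (π r (pl r)).1 = N) ∧
        (∀ r s : Fin ℓ, r < s → PathLt (pl r) (π r) (pl s) (π s)) ∧
        x = ∑ r, pathWeight w (pl r) (π r)} with hSB
  -- B ⊆ A
  have hBsubA : SB ⊆ SA := by
    rintro x ⟨pl, π, h1, h2, _, _, h5, h6⟩
    refine ⟨pl, π, h1, h2, ?_, h6⟩
    intro r s hrs
    rcases lt_or_gt_of_ne hrs with h | h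
    · exact pathLt_disjoint (h5 r s h)
    · exact (pathLt_disjoint (h5 s r h)).symm
  -- the rows configuration shows B (hence A) is nonempty
  have hrow_path : ∀ r : Fin ℓ, IsUpRightPath N k N (fun i => (i, r.val+1)) := by
    intro r
    constructor
    · intro i h1 h2
      have := r.isLt
      exact ⟨⟨h1, h2⟩, by show 1 ≤ r.val + 1; omega, by show r.val + 1 ≤ k; omega⟩
    · intro i h1 h2
      exact Or.inl ⟨by simp; omega, rfl⟩
  have hSBne : SB.Nonempty := by
    refine ⟨∑ r : Fin ℓ, pathWeight w N (fun i => (i, r.val+1)),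
      fun _ => N, fun r i => (i, r.val+1), fun _ => hN, hrow_path, fun _ => rfl, fun _ => rfl,
      ?_, rfl⟩
    intro r s hrs P hP Q hQ heq
    obtain ⟨i, _, rfl⟩ := hP
    obtain ⟨j, _, rfl⟩ := hQ
    have : r.val < s.val := hrs
    simpa using by omega
  have hSAne : SA.Nonempty := by
    obtain ⟨y, hy⟩ := hSBne
    exact ⟨y, hBsubA hy⟩
  -- boundedness
  have hSA_bdd : BddAbove SA := by
    refine ⟨∑ P ∈ Finset.Icc 1 N ×ˢ Finset.Icc 1 k, w P.1 P.2, ?_⟩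
    rintro x ⟨pl, π, h1, h2, h3, rfl⟩
    rw [sum_pathWeight_eq w pl π h3]
    apply Finset.sum_le_sum_of_subset_of_nonneg
    · apply Finset.biUnion_subset.2
      intro r _
      intro P hP
      simp only [Finset.mem_image, Finset.mem_Icc] at hP
      obtain ⟨i, hi, rfl⟩ := hP
      have hb := (h2 r).1 i hi.1 hi.2
      simp only [Finset.mem_product, Finset.mem_Icc]
      exact ⟨⟨hb.1.1, hb.1.2⟩, hb.2.1, hb.2.2⟩
    · intro P _ _
      exact hw _ _
  have hSB_bdd : BddAbove SB := hSA_bdd.mono hBsubA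
  refine le_antisymm ?_ (csSup_le_csSup hSA_bdd hSBne hBsubA)
  apply csSup_le hSAne
  rintro x ⟨pl, π, hpl, hpath, hdisj, rfl⟩
  -- the construction
  set idx : ℕ → Fin ℓ := fun s => ⟨(s-1) % ℓ, Nat.mod_lt _ hℓ0⟩ with hidxdef
  set Bf : ℕ → ℕ → ℕ := fun s => topF (pl (idx s)) (π (idx s)) with hBfdef
  have hBf1 : ∀ s n, 1 ≤ Bf s n := fun s n =>
    (topF_bounds (hpath (idx s)) (hpl (idx s)) n).1
  have hBfk : ∀ s n, Bf s n ≤ k := fun s n =>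
    (topF_bounds (hpath (idx s)) (hpl (idx s)) n).2
  have hBfm : ∀ s, Monotone (Bf s) := fun s => topF_mono (hpath (idx s)) (hpl (idx s))
  set c : ℕ → ℕ → ℕ := cF ℓ Bf with hcdef
  have hcm : ∀ t, Monotone (c t) := fun t => cF_mono_n hBfk hBfm t
  have hcr : ∀ t t' n', t ≤ t' → t' ≤ ℓ → c t n' ≤ c t' n' :=
    fun t t' n' h1 h2 => cF_mono_r hBfk h1 h2 n'
  set D : Fin ℓ → ℕ → ℕ := fun r => dF c ℓ (r.val + 1) with hDdef
  have hDmono : ∀ r, Monotone (D r) := fun r => dF_mono hcm _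
  have hD1 : ∀ r n, 1 ≤ D r n := fun r n => le_trans (by omega) (dF_lb (r.val+1) n)
  have hDk : ∀ r n, D r n ≤ k := by
    intro r n
    have hrl : r.val + 1 ≤ ℓ := r.isLt
    exact dF_ub (by omega) hrl (cF_le_k hBfk hrl n)
  set pl' : Fin ℓ → ℕ := fun r => pLen (D r) N with hpl'def
  set π' : Fin ℓ → ℕ → ℕ × ℕ := fun r => bP (D r) N with hπ'def
  have hpath' : ∀ r, IsUpRightPath N k (pl' r) (π' r) :=
    fun r => bP_path (hDmono r) hN (hD1 r) (hDk r)
  have hpl'1 : ∀ r, 1 ≤ pl' r := by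
    intro r
    have := hDmono r (Nat.zero_le N)
    simp only [hpl'def]
    unfold pLen
    omega
  have hstart : ∀ r, (π' r 1).1 = 1 := fun r => bP_start (hDmono r) hN
  have hend : ∀ r, (π' r (pl' r)).1 = N := fun r => bP_end (hDmono r) hN (hpl'1 r)
  have hsupp' : ∀ (r : Fin ℓ) (P : ℕ × ℕ), P ∈ pathSupport (pl' r) (π' r) →
      (1 ≤ P.1 ∧ P.1 ≤ N) ∧ D r (P.1 - 1) ≤ P.2 ∧ P.2 ≤ D r P.1 := by
    intro r P hP
    obtain ⟨i, hi, rfl⟩ := hP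
    rw [Set.mem_Icc] at hi
    have := point_spec (hDmono r) hN hi.1 hi.2
    exact ⟨this.1, this.2.1, this.2.2.1⟩
  have hLt : ∀ r s : Fin ℓ, r < s → PathLt (pl' r) (π' r) (pl' s) (π' s) := by
    intro r s hrs P hP Q hQ heq
    obtain h1 := hsupp' r P hP
    obtain h2 := hsupp' s Q hQ
    have hrsv : r.val < s.val := hrs
    have hd := dF_lt (c := c) (ℓ := ℓ) hcm (r := r.val+1) (s := s.val+1) (n := P.1)
      (by omega) (by omega) (by exact s.isLt)
    have hDD : D r P.1 < D s (Q.1 - 1) := by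
      rw [← heq]
      exact hd
    omega
  have hdisj' : ∀ r s, r ≠ s →
      Disjoint (pathSupport (pl' r) (π' r)) (pathSupport (pl' s) (π' s)) := by
    intro r s hrs
    rcases lt_or_gt_of_ne hrs with h | h
    · exact pathLt_disjoint (hLt r s h)
    · exact (pathLt_disjoint (hLt s r h)).symm
  have hymem : (∑ r, pathWeight w (pl' r) (π' r)) ∈ SB :=
    ⟨pl', π', hpl'1, hpath', hstart, hend, hLt, rfl⟩
  -- comparison of weights
  have hTsub : Finset.univ.biUnion (fun r => (Finset.Icc 1 (pl r)).image (π r)) ⊆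
      Finset.univ.biUnion (fun r => (Finset.Icc 1 (pl' r)).image (π' r)) := by
    intro P hP
    simp only [Finset.mem_biUnion, Finset.mem_univ, true_and] at hP ⊢
    obtain ⟨r, hPr⟩ := hP
    simp only [Finset.mem_image, Finset.mem_Icc] at hPr
    obtain ⟨i, ⟨hi1, hi2⟩, rfl⟩ := hPr
    have hb := (hpath r).1 i hi1 hi2
    have hidx : idx (r.val + 1) = r := by
      simp only [hidxdef]
      apply Fin.ext
      simp only [Nat.add_sub_cancel]
      exact Nat.mod_eq_of_lt r.isLt
    have hT3 := topF_support (hpath r) (hpl r) hi1 hi2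
    have hBfs : Bf (r.val+1) ((π r i).1 - 1) ≤ (π r i).2 ∧
        (π r i).2 ≤ Bf (r.val+1) ((π r i).1) := by
      simp only [hBfdef, hidx]
      exact hT3
    obtain ⟨r₁, hr₁1, hr₁2, hc1, hc2⟩ := cF_cover hBfk hBfm
      (show 1 ≤ r.val+1 by omega) (show r.val+1 ≤ ℓ from r.isLt) hBfs.1 hBfs.2
    obtain ⟨r₂, h21, h22, hd1', hd2'⟩ := dF_cover hcm hcr hr₁1 hr₁2 hb.2.1 hc1 hc2
    refine ⟨⟨r₂ - 1, by omega⟩, ?_⟩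
    have hr21 : r₂ - 1 + 1 = r₂ := by omega
    have hDt : D ⟨r₂ - 1, by omega⟩ = dF c ℓ r₂ := by
      show dF c ℓ (r₂ - 1 + 1) = dF c ℓ r₂
      rw [hr21]
    obtain ⟨i', hi'1, hi'2, hbp⟩ := bP_supp (d := D ⟨r₂ - 1, by omega⟩)
      (n := (π r i).1) (h := (π r i).2) (hDmono ⟨r₂ - 1, by omega⟩) hN
      hb.1.1 hb.1.2 (by rw [hDt]; exact hd1') (by rw [hDt]; exact hd2')
    simp only [Finset.mem_image, Finset.mem_Icc]
    refine ⟨i', ⟨hi'1, hi'2⟩, ?_⟩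
    simp only [hπ'def]
    rw [hbp]
  have hxy : (∑ r, pathWeight w (pl r) (π r)) ≤ ∑ r, pathWeight w (pl' r) (π' r) := by
    rw [sum_pathWeight_eq w pl π hdisj, sum_pathWeight_eq w pl' π' hdisj']
    exact Finset.sum_le_sum_of_subset_of_nonneg hTsub (fun P _ _ => hw _ _)
  exact hxy.trans (le_csSup hSB_bdd hymem)
end
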